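/- arXiv:0903.2838 — 7 statements merged into one kernel-verified Lean document; each statement's English description precedes it below -/
import Mathlib

section
/- Let d, N be positive integers, let ρ_1, …, ρ_N be density matrices on ℂ^d, and let {E_x}_{x=1}^N be a POVM with N outcomes on ℂ^d. Then the average success probability satisfies (1/N) · Σ_{x=1}^N tr(E_x ρ_x) ≤ d/N. -/
open Matrix ComplexOrder

/-!
Every eigenvalue of a positive semidefinite `ρ` is at most the sum of all of them, so
`ρ ≤ (tr ρ) • 1`; for a density matrix this is `ρ ≤ 1`. Since `B ↦ tr (E B)` is monotone for
`E ≥ 0` (write `E = √E √E` and cycle the trace), `tr (E_x ρ_x) ≤ tr E_x`, and the POVM condition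
sums these bounds to `tr 1 = d`.
-/

namespace Matrix

variable {n 𝕜 : Type*} [Fintype n] [RCLike 𝕜]

open scoped MatrixOrder

lemma PosSemidef.eigenvalues_le_re_trace [DecidableEq n] {A : Matrix n n 𝕜} (hA : A.PosSemidef)
    (i : n) : hA.isHermitian.eigenvalues i ≤ RCLike.re A.trace := by
  rw [hA.isHermitian.trace_eq_sum_eigenvalues, ← RCLike.ofReal_sum, RCLike.ofReal_re]
  exact Finset.single_le_sum (fun j _ ↦ hA.eigenvalues_nonneg j) (Finset.mem_univ i)

lemma PosSemidef.le_algebraMap_re_trace [DecidableEq n] {A : Matrix n n 𝕜} (hA : A.PosSemidef) :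
    A ≤ algebraMap ℝ (Matrix n n 𝕜) (RCLike.re A.trace) := by
  refine le_algebraMap_of_spectrum_le (fun x hx ↦ ?_) hA.isHermitian
  obtain ⟨i, rfl⟩ := hA.isHermitian.spectrum_real_eq_range_eigenvalues ▸ hx
  exact hA.eigenvalues_le_re_trace i

lemma PosSemidef.re_trace_mul_nonneg {A B : Matrix n n 𝕜} (hA : A.PosSemidef)
    (hB : B.PosSemidef) : 0 ≤ RCLike.re (A * B).trace := by
  classical
  have hconj := hB.mul_mul_conjTranspose_same (CFC.sqrt A)
  rw [← star_eq_conjTranspose, IsSelfAdjoint.star_eq (CFC.sqrt_nonneg A).isSelfAdjoint] at hconj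
  rw [← CFC.sqrt_mul_sqrt_self A hA.nonneg, mul_assoc, trace_mul_comm]
  exact (RCLike.nonneg_iff.mp hconj.trace_nonneg).1

lemma PosSemidef.re_trace_mul_le_of_le {A B C : Matrix n n 𝕜} (hA : A.PosSemidef) (hBC : B ≤ C) :
    RCLike.re (A * B).trace ≤ RCLike.re (A * C).trace := by
  have := hA.re_trace_mul_nonneg hBC
  rwa [mul_sub, trace_sub, map_sub, sub_nonneg] at this

lemma PosSemidef.re_trace_mul_le {A B : Matrix n n 𝕜} (hA : A.PosSemidef) (hB : B.PosSemidef) :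
    RCLike.re (A * B).trace ≤ RCLike.re A.trace * RCLike.re B.trace := by
  classical
  calc RCLike.re (A * B).trace
      ≤ RCLike.re (A * algebraMap ℝ (Matrix n n 𝕜) (RCLike.re B.trace)).trace :=
        hA.re_trace_mul_le_of_le hB.le_algebraMap_re_trace
    _ = RCLike.re A.trace * RCLike.re B.trace := by
        rw [Algebra.algebraMap_eq_smul_one, mul_smul_comm, mul_one, trace_smul, RCLike.smul_re,
          mul_comm]

end Matrix

theorem strong_converse_identity_channel_general
    (d N : ℕ)
    (ρ : Fin N → Matrix (Fin d) (Fin d) ℂ)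
    (hρ_psd : ∀ x, (ρ x).PosSemidef) (hρ_tr : ∀ x, (ρ x).trace = 1)
    (E : Fin N → Matrix (Fin d) (Fin d) ℂ)
    (hE_psd : ∀ x, (E x).PosSemidef) (hE_sum : ∑ x, E x = 1) :
    (1 / N : ℝ) * ∑ x, ((E x * ρ x).trace).re ≤ (d : ℝ) / N := by
  have hsuccess : ∑ x, ((E x * ρ x).trace).re ≤ d := calc
    ∑ x, ((E x * ρ x).trace).re ≤ ∑ x, ((E x).trace).re := by
      refine Finset.sum_le_sum fun x _ ↦ ?_
      simpa [hρ_tr x] using (hE_psd x).re_trace_mul_le (hρ_psd x)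
    _ = d := by simp [← Complex.re_sum, ← trace_sum, hE_sum]
  rw [one_div_mul_eq_div]
  gcongr

/-- **Strong converse for the identity channel.**
If `N` messages are encoded into density matrices `ρ x` on `ℂ^d` and decoded with a POVM
`{E x}`, the average success probability is at most `d / N`. -/
theorem strong_converse_identity_channel
    (d N : ℕ) (hd : 0 < d) (hN : 0 < N)
    (ρ : Fin N → Matrix (Fin d) (Fin d) ℂ)
    (hρ_psd : ∀ x, (ρ x).PosSemidef) (hρ_tr : ∀ x, (ρ x).trace = 1)
    (E : Fin N → Matrix (Fin d) (Fin d) ℂ)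
    (hE_psd : ∀ x, (E x).PosSemidef) (hE_sum : ∑ x, E x = 1) :
    (1 / N : ℝ) * ∑ x, ((E x * ρ x).trace).re ≤ (d : ℝ) / N :=
  strong_converse_identity_channel_general d N ρ hρ_psd hρ_tr E hE_psd hE_sum
end

section
/- Let σ_1, …, σ_N be density matrices on ℂ^d, let {E_x}_{x=1}^N be a POVM with N outcomes on ℂ^d, and let α > 1 be a real number. Then the average success probability satisfies (1/N) · Σ_{x=1}^N tr(E_x σ_x) ≤ 2^{((α−1)/α) · (−log₂ N + χ_α)}, where χ_α = χ_α({1/N, σ_x}) is the α-Holevo quantity of the uniform ensemble of the states σ_1, …, σ_N. -/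
open Matrix ComplexOrder

/-- Matrix power via functional calculus on eigenvalues, with the convention `0 ^ β = 0`
(matrices that are not Hermitian are sent to `0`). -/
noncomputable def mpow {d : ℕ} (A : Matrix (Fin d) (Fin d) ℂ) (β : ℝ) :
    Matrix (Fin d) (Fin d) ℂ :=
  if hA : A.IsHermitian then
    (hA.eigenvectorUnitary : Matrix (Fin d) (Fin d) ℂ) *
      Matrix.diagonal (fun i =>
        ((if hA.eigenvalues i = 0 then (0 : ℝ) else hA.eigenvalues i ^ β : ℝ) : ℂ)) *
      star (hA.eigenvectorUnitary : Matrix (Fin d) (Fin d) ℂ)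
  else 0

/-- The `α`-Holevo quantity of an ensemble `{p x, ρ x}`:
`χ_α = (α/(α−1)) · log₂ tr((∑ x, p x • ρ x ^ α)^(1/α))`. -/
noncomputable def chiAlpha {d m : ℕ} (α : ℝ) (p : Fin m → ℝ)
    (ρ : Fin m → Matrix (Fin d) (Fin d) ℂ) : ℝ :=
  (α / (α - 1)) * Real.logb 2 ((mpow (∑ x, (p x : ℂ) • mpow (ρ x) α) (1 / α)).trace).re

/-! Each `σ x` equals `(σ x ^ α) ^ α⁻¹ ≤ (∑ y, σ y ^ α) ^ α⁻¹ =: S`, by operator monotonicity of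
`t ↦ t ^ α⁻¹` (Löwner–Heinz, as `α⁻¹ ∈ [0, 1]`). Hence `tr (E x σ x) ≤ tr (E x S)`, and summing over
the POVM gives `∑ x, tr (E x σ x) ≤ tr S`. The uniform weights only rescale the matrix inside `χ_α`
by `1 / N`, which turns the right-hand side of the theorem into exactly `tr S / N`. -/

open scoped MatrixOrder Matrix.Norms.L2Operator

namespace CFC

variable {A : Type*} [CStarAlgebra A] [PartialOrder A] [StarOrderedRing A]

lemma smul_rpow {c : ℝ} (hc : 0 ≤ c) {a : A} (ha : 0 ≤ a) {p : ℝ} (hp : 0 ≤ p) :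
    (c • a) ^ p = c ^ p • a ^ p := by
  have hcont : Continuous fun t : ℝ => t ^ p := Real.continuous_rpow_const hp
  rw [rpow_eq_cfc_real (smul_nonneg hc ha), rpow_eq_cfc_real ha,
    ← cfc_comp_smul c _ a hcont.continuousOn, ← cfc_const_mul _ _ a hcont.continuousOn]
  refine cfc_congr fun t ht => ?_
  exact Real.mul_rpow hc (spectrum_nonneg_of_nonneg ha ht)

lemma le_rpow_sum_rpow {ι : Type*} [Fintype ι] {ρ : ι → A} (hρ : ∀ i, 0 ≤ ρ i) {α : ℝ}
    (hα : 1 ≤ α) (i : ι) : ρ i ≤ (∑ j, ρ j ^ α) ^ α⁻¹ := by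
  have hα₀ : α ≠ 0 := by positivity
  calc ρ i = (ρ i ^ α) ^ α⁻¹ := by
        rw [rpow_rpow_of_exponent_nonneg _ _ _ (by positivity) (by positivity) (hρ i),
          mul_inv_cancel₀ hα₀, rpow_one _ (hρ i)]
    _ ≤ (∑ j, ρ j ^ α) ^ α⁻¹ :=
        rpow_le_rpow ⟨by positivity, inv_le_one_of_one_le₀ hα⟩
          (Finset.single_le_sum (fun j _ => rpow_nonneg) (Finset.mem_univ i))

end CFC

namespace Matrix

variable {n : Type*} [Fintype n] [DecidableEq n]

lemma trace_mul_le_trace_mul {E A B : Matrix n n ℂ} (hE : 0 ≤ E) (hAB : A ≤ B) :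
    (E * A).trace ≤ (E * B).trace := by
  obtain ⟨C, rfl⟩ := CStarAlgebra.nonneg_iff_eq_star_mul_self.mp hE
  have hcycle (X : Matrix n n ℂ) : (star C * C * X).trace = (C * X * star C).trace := by
    rw [mul_assoc, trace_mul_comm]
  rw [hcycle, hcycle]
  exact (tracePositiveLinearMap n ℂ ℂ).monotone (star_right_conjugate_le_conjugate hAB C)

lemma sum_trace_mul_le_trace_rpow_sum {ι : Type*} [Fintype ι] {E ρ : ι → Matrix n n ℂ}
    (hE : ∀ i, 0 ≤ E i) (hE_sum : ∑ i, E i = 1) (hρ : ∀ i, 0 ≤ ρ i) {α : ℝ} (hα : 1 ≤ α) :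
    ∑ i, (E i * ρ i).trace ≤ ((∑ i, ρ i ^ α) ^ α⁻¹).trace :=
  calc ∑ i, (E i * ρ i).trace
      ≤ ∑ i, (E i * (∑ j, ρ j ^ α) ^ α⁻¹).trace :=
        Finset.sum_le_sum fun i _ => trace_mul_le_trace_mul (hE i) (CFC.le_rpow_sum_rpow hρ hα i)
    _ = ((∑ i, ρ i ^ α) ^ α⁻¹).trace := by
        rw [← trace_sum, ← Finset.sum_mul, hE_sum, one_mul]

end Matrix

lemma mpow_eq_rpow {d : ℕ} {A : Matrix (Fin d) (Fin d) ℂ} (hA : 0 ≤ A) {β : ℝ} (hβ : β ≠ 0) :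
    mpow A β = A ^ β := by
  have hA' : A.IsHermitian := hA.posSemidef.isHermitian
  rw [CFC.rpow_eq_cfc_real hA, hA'.cfc_eq]
  unfold mpow Matrix.IsHermitian.cfc
  rw [dif_pos hA']
  congr 3
  ext i
  by_cases h : hA'.eigenvalues i = 0 <;> simp [h, Real.zero_rpow hβ]

lemma chiAlpha_eq {d m : ℕ} {α : ℝ} (hα : α ≠ 0) {p : Fin m → ℝ} (hp : ∀ x, 0 ≤ p x)
    {ρ : Fin m → Matrix (Fin d) (Fin d) ℂ} (hρ : ∀ x, 0 ≤ ρ x) :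
    chiAlpha α p ρ = α / (α - 1) * Real.logb 2 ((∑ x, p x • ρ x ^ α) ^ α⁻¹).trace.re := by
  have hsum : 0 ≤ ∑ x, p x • ρ x ^ α :=
    Finset.sum_nonneg fun x _ => smul_nonneg (hp x) CFC.rpow_nonneg
  simp only [chiAlpha, mpow_eq_rpow (hρ _) hα, Complex.coe_smul, one_div,
    mpow_eq_rpow hsum (inv_ne_zero hα)]

lemma two_rpow_exponent_eq_div {N T α : ℝ} (hN : 0 < N) (hT : 0 < T) (hα : 1 < α) :
    (2 : ℝ) ^ ((α - 1) / α * (-Real.logb 2 N + α / (α - 1) * Real.logb 2 ((1 / N) ^ α⁻¹ * T)))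
      = T / N := by
  have hα₀ : α ≠ 0 := by positivity
  have hα₁ : α - 1 ≠ 0 := sub_ne_zero.2 hα.ne'
  have hexp : (α - 1) / α * (-Real.logb 2 N + α / (α - 1) * Real.logb 2 ((1 / N) ^ α⁻¹ * T))
      = Real.logb 2 (T / N) := by
    rw [Real.logb_mul (by positivity) hT.ne', Real.logb_rpow_eq_mul_logb_of_pos (by positivity),
      one_div, Real.logb_inv, Real.logb_div hT.ne' hN.ne']
    field_simp
    ring
  rw [hexp, Real.rpow_logb two_pos (by norm_num) (by positivity)]

/-- For density matrices `σ 1, …, σ N`, a POVM `{E x}` and `α > 1`, the average success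
probability is bounded by `2 ^ (((α−1)/α)·(−log₂ N + χ_α))`, where `χ_α` is the `α`-Holevo
quantity of the uniform ensemble of the `σ x`. -/
theorem avg_success_le_two_rpow_chiAlpha
    (d N : ℕ) (hN : 0 < N) (σ : Fin N → Matrix (Fin d) (Fin d) ℂ)
    (hσ_psd : ∀ x, (σ x).PosSemidef) (hσ_tr : ∀ x, (σ x).trace = 1)
    (E : Fin N → Matrix (Fin d) (Fin d) ℂ)
    (hE_psd : ∀ x, (E x).PosSemidef) (hE_sum : ∑ x, E x = 1)
    (α : ℝ) (hα : 1 < α) :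
    (1 / N : ℝ) * ∑ x, ((E x * σ x).trace).re ≤
      (2 : ℝ) ^ (((α - 1) / α) * (-(Real.logb 2 N) + chiAlpha α (fun _ => 1 / N) σ)) := by
  have hσ (x : Fin N) : 0 ≤ σ x := (hσ_psd x).nonneg
  set S := (∑ x, σ x ^ α) ^ α⁻¹
  have hchi : chiAlpha α (fun _ => 1 / N) σ
      = α / (α - 1) * Real.logb 2 ((1 / N : ℝ) ^ α⁻¹ * S.trace.re) := by
    rw [chiAlpha_eq (by positivity) (fun _ => by positivity) hσ, ← Finset.smul_sum,
      CFC.smul_rpow (by positivity) (Finset.sum_nonneg fun x _ => CFC.rpow_nonneg) (by positivity),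
      trace_smul, Complex.smul_re, smul_eq_mul]
  have hsuccess : ∑ x, ((E x * σ x).trace).re ≤ S.trace.re := by
    rw [← Complex.re_sum]
    exact Complex.re_le_re <| Matrix.sum_trace_mul_le_trace_rpow_sum
      (fun x => (hE_psd x).nonneg) hE_sum hσ hα.le
  have hS : 1 ≤ S.trace.re := by
    have := (tracePositiveLinearMap (Fin d) ℂ ℂ).monotone (CFC.le_rpow_sum_rpow hσ hα.le ⟨0, hN⟩)
    simpa [hσ_tr] using Complex.re_le_re this
  rw [hchi, two_rpow_exponent_eq_div (by positivity) (by linarith) hα, one_div_mul_eq_div]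
  gcongr
end

section
/- Let A and B be positive semidefinite d×d complex matrices with eigenvalues λ^A = (λ^A_1, …, λ^A_d) and λ^B = (λ^B_1, …, λ^B_d) (listed with multiplicity in some fixed order). Then there exist permutations π_min and π_max of {1,…,d} such that for every unitary matrix U: Σ_{j=1}^d λ^A_{π_min(j)} λ^B_j ≤ tr(U A U† B) ≤ Σ_{j=1}^d λ^A_{π_max(j)} λ^B_j. -/
open Matrix ComplexOrder

lemma unitary_normSq_doublyStochastic {d : ℕ} (N : Matrix (Fin d) (Fin d) ℂ)
    (hN : N ∈ Matrix.unitaryGroup (Fin d) ℂ) :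
    (Matrix.of fun i j => Complex.normSq (N i j)) ∈ doublyStochastic ℝ (Fin d) := by
  rw [mem_doublyStochastic_iff_sum]
  refine ⟨fun i j => Complex.normSq_nonneg _, fun i => ?_, fun j => ?_⟩
  · have h := Matrix.mem_unitaryGroup_iff.mp hN
    have h2 : (N * star N) i i = (1 : Matrix (Fin d) (Fin d) ℂ) i i := by rw [h]
    simp only [Matrix.mul_apply, Matrix.star_apply, Matrix.conjTranspose_apply,
      Matrix.one_apply_eq] at h2
    have : ((∑ j, Complex.normSq (N i j) : ℝ) : ℂ) = 1 := by
      push_cast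
      rw [← h2]
      exact Finset.sum_congr rfl fun j _ => by simp [Complex.star_def, Complex.mul_conj]
    exact_mod_cast this
  · have h := Matrix.mem_unitaryGroup_iff'.mp hN
    have h2 : (star N * N) j j = (1 : Matrix (Fin d) (Fin d) ℂ) j j := by rw [h]
    simp only [Matrix.mul_apply, Matrix.star_apply, Matrix.conjTranspose_apply,
      Matrix.one_apply_eq] at h2
    have : ((∑ i, Complex.normSq (N i j) : ℝ) : ℂ) = 1 := by
      push_cast
      rw [← h2]
      exact Finset.sum_congr rfl fun i _ => by simp [Complex.star_def, mul_comm, Complex.mul_conj]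
    exact_mod_cast this

lemma trace_expand {d : ℕ} (N : Matrix (Fin d) (Fin d) ℂ) (a b : Fin d → ℝ) :
    (N * Matrix.diagonal (Complex.ofReal ∘ a) * star N * Matrix.diagonal (Complex.ofReal ∘ b)).trace
      = ((∑ i, ∑ j, a j * b i * Complex.normSq (N i j) : ℝ) : ℂ) := by
  simp only [Matrix.trace, Matrix.diag, Matrix.mul_apply, Matrix.diagonal_apply,
    Matrix.star_apply, Matrix.conjTranspose_apply, Function.comp_apply,
    mul_ite, ite_mul, mul_zero, zero_mul, Finset.sum_ite_eq, Finset.sum_ite_eq',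
    Finset.mem_univ, if_true]
  push_cast
  refine Finset.sum_congr rfl fun i _ => ?_
  rw [Finset.sum_mul]
  refine Finset.sum_congr rfl fun j _ => ?_
  rw [← Complex.mul_conj]
  simp [Complex.star_def]
  ring

/-- For positive semidefinite `A, B` with eigenvalue lists `λ^A`, `λ^B`, there are permutations
`π_min, π_max` such that for every unitary `U`:
`∑ j, λ^A_{π_min j} λ^B_j ≤ tr(U A U† B) ≤ ∑ j, λ^A_{π_max j} λ^B_j`. -/
theorem trace_unitary_conj_mul_bounds
    (d : ℕ) (A B : Matrix (Fin d) (Fin d) ℂ)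
    (hA : A.PosSemidef) (hB : B.PosSemidef) :
    ∃ πmin πmax : Equiv.Perm (Fin d),
      ∀ U ∈ Matrix.unitaryGroup (Fin d) ℂ,
        (∑ j, hA.isHermitian.eigenvalues (πmin j) * hB.isHermitian.eigenvalues j
            ≤ ((U * A * star U * B).trace).re) ∧
        ((U * A * star U * B).trace).re
            ≤ ∑ j, hA.isHermitian.eigenvalues (πmax j) * hB.isHermitian.eigenvalues j := by
  classical
  set a := hA.isHermitian.eigenvalues with ha
  set b := hB.isHermitian.eigenvalues with hb
  -- the linear functional
  let f : Matrix (Fin d) (Fin d) ℝ →ₗ[ℝ] ℝ :=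
    { toFun := fun S => ∑ i, ∑ j, a j * b i * S i j
      map_add' := fun x y => by
        simp [Matrix.add_apply, mul_add, Finset.sum_add_distrib]
      map_smul' := fun c x => by
        simp only [Matrix.smul_apply, smul_eq_mul, RingHom.id_apply, Finset.mul_sum]
        exact Finset.sum_congr rfl fun i _ => Finset.sum_congr rfl fun j _ => by ring }
  have hgperm : ∀ σ : Equiv.Perm (Fin d), f (σ.permMatrix ℝ) = ∑ j, a (σ j) * b j := by
    intro σ
    simp [f, Equiv.Perm.permMatrix, PEquiv.toMatrix_apply, Equiv.toPEquiv_apply]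
  obtain ⟨πmax, hπmax⟩ := Finite.exists_max (fun σ : Equiv.Perm (Fin d) => ∑ j, a (σ j) * b j)
  obtain ⟨πmin, hπmin⟩ := Finite.exists_min (fun σ : Equiv.Perm (Fin d) => ∑ j, a (σ j) * b j)
  refine ⟨πmin, πmax, fun U hU => ?_⟩
  set V : Matrix (Fin d) (Fin d) ℂ := (hA.isHermitian.eigenvectorUnitary : Matrix (Fin d) (Fin d) ℂ) with hV
  set W : Matrix (Fin d) (Fin d) ℂ := (hB.isHermitian.eigenvectorUnitary : Matrix (Fin d) (Fin d) ℂ) with hW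
  set N : Matrix (Fin d) (Fin d) ℂ := star W * (U * V) with hNdef
  have hVmem : V ∈ Matrix.unitaryGroup (Fin d) ℂ := (hA.isHermitian.eigenvectorUnitary).2
  have hWmem : W ∈ Matrix.unitaryGroup (Fin d) ℂ := (hB.isHermitian.eigenvectorUnitary).2
  have hNmem : N ∈ Matrix.unitaryGroup (Fin d) ℂ :=
    mul_mem (Unitary.star_mem hWmem) (mul_mem hU hVmem)
  have hAspec := hA.isHermitian.spectral_theorem
  have hBspec := hB.isHermitian.spectral_theorem
  set DA : Matrix (Fin d) (Fin d) ℂ := Matrix.diagonal (Complex.ofReal ∘ a) with hDA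
  set DB : Matrix (Fin d) (Fin d) ℂ := Matrix.diagonal (Complex.ofReal ∘ b) with hDB
  have hAeq : A = V * DA * star V := hAspec
  have hBeq : B = W * DB * star W := hBspec
  have key : (U * A * star U * B).trace = (N * DA * star N * DB).trace := by
    have h1 : U * A * star U * B = (U * A * star U * W * DB) * star W := by
      rw [hBeq]; simp only [Matrix.mul_assoc]
    rw [h1, Matrix.trace_mul_comm]
    congr 1
    rw [hAeq, hNdef]
    simp only [Matrix.star_mul, star_star, Matrix.mul_assoc]
  have hre : ((U * A * star U * B).trace).re
      = ∑ i, ∑ j, a j * b i * Complex.normSq (N i j) := by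
    rw [key, trace_expand, Complex.ofReal_re]
  set S : Matrix (Fin d) (Fin d) ℝ := Matrix.of fun i j => Complex.normSq (N i j) with hS
  have hfS : ((U * A * star U * B).trace).re = f S := hre
  have hSmem : S ∈ doublyStochastic ℝ (Fin d) := unitary_normSq_doublyStochastic N hNmem
  have hSmem' : S ∈ convexHull ℝ {P | ∃ σ : Equiv.Perm (Fin d), σ.permMatrix ℝ = P} := by
    rw [← doublyStochastic_eq_convexHull_permMatrix]; exact hSmem
  constructor
  · obtain ⟨P, hP, hle⟩ := ((f.concaveOn convex_univ).exists_le_of_mem_convexHull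
      (Set.subset_univ _) hSmem')
    obtain ⟨σ, rfl⟩ := hP
    calc ∑ j, a (πmin j) * b j ≤ ∑ j, a (σ j) * b j := hπmin σ
      _ = f (σ.permMatrix ℝ) := (hgperm σ).symm
      _ ≤ f S := hle
      _ = ((U * A * star U * B).trace).re := hfS.symm
  · obtain ⟨P, hP, hle⟩ := ((f.convexOn convex_univ).exists_ge_of_mem_convexHull
      (Set.subset_univ _) hSmem')
    obtain ⟨σ, rfl⟩ := hP
    calc ((U * A * star U * B).trace).re = f S := hfS
      _ ≤ f (σ.permMatrix ℝ) := hle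
      _ = ∑ j, a (σ j) * b j := hgperm σ
      _ ≤ ∑ j, a (πmax j) * b j := hπmax σ
end

section
/- Let ρ and σ be density matrices on ℂ^d with σ positive definite, and let α > 1 be a real number. Then D_α(ρ‖σ) ≥ 0, equivalently tr(ρ^α σ^{1−α}) ≥ 1, and equality holds if and only if ρ = σ. -/
open Matrix ComplexOrder

/-!
Diagonalize `ρ = U diag(p) U*` and `σ = V diag(q) V*`. Then
`tr(ρ^α σ^(1-α)) = ∑ i j, D i j * p i ^ α * q j ^ (1 - α)` with `D i j = ‖(U* V) i j‖²`
doubly stochastic. Since `p ^ α * q ^ (1 - α) = q * (p / q) ^ α`, this is the Jensen sum of the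
strictly convex `t ↦ t ^ α` for the probability weights `D i j * q j` at the points `p i / q j`,
whose mean is `∑ i, p i = 1`. Hence it is at least `1`, with equality iff `p i = q j` whenever
`D i j ≠ 0`, that is, iff `diag(p) (U* V) = (U* V) diag(q)`, that is, iff `ρ = σ`.
-/

namespace Real

section Perspective

variable {ι κ : Type*} [Fintype ι] [Fintype κ] {α : ℝ} {p : ι → ℝ} {q : κ → ℝ}
  {D : ι → κ → ℝ}

lemma mul_div_rpow_eq_rpow_mul_rpow_one_sub {a b : ℝ} (ha : 0 ≤ a) (hb : 0 < b) :
    b * (a / b) ^ α = a ^ α * b ^ (1 - α) := by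
  rw [div_rpow ha hb.le, rpow_sub hb, rpow_one]
  field_simp

lemma sum_mul_rpow_mul_rpow_one_sub_eq (hp : ∀ i, 0 ≤ p i) (hq : ∀ j, 0 < q j) :
    ∑ i, ∑ j, D i j * (p i ^ α * q j ^ (1 - α)) =
      ∑ x : ι × κ, (D x.1 x.2 * q x.2) * (p x.1 / q x.2) ^ α := by
  rw [← Finset.univ_product_univ, Finset.sum_product]
  refine Finset.sum_congr rfl fun i _ => Finset.sum_congr rfl fun j _ => ?_
  rw [mul_assoc, mul_div_rpow_eq_rpow_mul_rpow_one_sub (hp i) (hq j)]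

lemma sum_apply_mul_eq_one (hq1 : ∑ j, q j = 1) (hcol : ∀ j, ∑ i, D i j = 1) :
    ∑ x : ι × κ, D x.1 x.2 * q x.2 = 1 := by
  rw [← Finset.univ_product_univ, Finset.sum_product_right]
  simp_rw [← Finset.sum_mul, hcol, one_mul, hq1]

lemma sum_apply_mul_mul_div_eq_one (hq : ∀ j, 0 < q j) (hp1 : ∑ i, p i = 1)
    (hrow : ∀ i, ∑ j, D i j = 1) :
    ∑ x : ι × κ, (D x.1 x.2 * q x.2) * (p x.1 / q x.2) = 1 := by
  rw [← Finset.univ_product_univ, Finset.sum_product]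
  calc ∑ i, ∑ j, D i j * q j * (p i / q j) = ∑ i, (∑ j, D i j) * p i := by
        refine Finset.sum_congr rfl fun i _ => ?_
        rw [Finset.sum_mul]
        exact Finset.sum_congr rfl fun j _ => by field_simp [(hq j).ne']
    _ = 1 := by simp_rw [hrow, one_mul, hp1]

theorem one_le_sum_mul_rpow_mul_rpow_one_sub (hα : 1 < α) (hp : ∀ i, 0 ≤ p i)
    (hq : ∀ j, 0 < q j) (hp1 : ∑ i, p i = 1) (hq1 : ∑ j, q j = 1) (hD : ∀ i j, 0 ≤ D i j)
    (hrow : ∀ i, ∑ j, D i j = 1) (hcol : ∀ j, ∑ i, D i j = 1) :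
    1 ≤ ∑ i, ∑ j, D i j * (p i ^ α * q j ^ (1 - α)) := by
  have h := rpow_arith_mean_le_arith_mean_rpow Finset.univ (fun x : ι × κ => D x.1 x.2 * q x.2)
    (fun x => p x.1 / q x.2) (fun x _ => mul_nonneg (hD _ _) (hq _).le)
    (sum_apply_mul_eq_one hq1 hcol) (fun x _ => div_nonneg (hp _) (hq _).le) hα.le
  rwa [sum_apply_mul_mul_div_eq_one hq hp1 hrow, one_rpow,
    ← sum_mul_rpow_mul_rpow_one_sub_eq hp hq] at h

theorem sum_mul_rpow_mul_rpow_one_sub_eq_one_iff (hα : 1 < α) (hp : ∀ i, 0 ≤ p i)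
    (hq : ∀ j, 0 < q j) (hp1 : ∑ i, p i = 1) (hq1 : ∑ j, q j = 1) (hD : ∀ i j, 0 ≤ D i j)
    (hrow : ∀ i, ∑ j, D i j = 1) (hcol : ∀ j, ∑ i, D i j = 1) :
    ∑ i, ∑ j, D i j * (p i ^ α * q j ^ (1 - α)) = 1 ↔ ∀ i j, D i j ≠ 0 → p i = q j := by
  have h := (strictConvexOn_rpow hα).map_sum_eq_iff' (t := Finset.univ)
    (w := fun x : ι × κ => D x.1 x.2 * q x.2) (p := fun x => p x.1 / q x.2)
    (fun x _ => mul_nonneg (hD _ _) (hq _).le) (sum_apply_mul_eq_one hq1 hcol)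
    (fun x _ => div_nonneg (hp _) (hq _).le)
  simp only [smul_eq_mul, sum_apply_mul_mul_div_eq_one hq hp1 hrow, one_rpow,
    ← sum_mul_rpow_mul_rpow_one_sub_eq hp hq, Finset.mem_univ, true_implies, Prod.forall,
    mul_ne_zero_iff, div_eq_one_iff_eq (hq _).ne'] at h
  rw [eq_comm, h]
  exact forall₂_congr fun i j => by simp only [(hq j).ne', ne_eq, not_false_eq_true, and_true]

end Perspective

end Real

namespace Matrix

variable {n 𝕜 : Type*} [Fintype n] [DecidableEq n] [RCLike 𝕜]

lemma sum_norm_sq_apply_right_of_mem_unitaryGroup {U : Matrix n n 𝕜}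
    (hU : U ∈ unitaryGroup n 𝕜) (i : n) : ∑ j, ‖U i j‖ ^ 2 = 1 := by
  have h : (U * star U) i i = 1 := by rw [Unitary.mul_star_self_of_mem hU, one_apply_eq]
  simp only [mul_apply, star_apply, RCLike.star_def, RCLike.mul_conj] at h
  exact_mod_cast h

lemma sum_norm_sq_apply_left_of_mem_unitaryGroup {U : Matrix n n 𝕜}
    (hU : U ∈ unitaryGroup n 𝕜) (j : n) : ∑ i, ‖U i j‖ ^ 2 = 1 := by
  simpa only [star_apply, norm_star] using
    sum_norm_sq_apply_right_of_mem_unitaryGroup (Unitary.star_mem hU) j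

lemma trace_conj_diagonal_mul_conj_diagonal (U V : Matrix n n 𝕜) (f g : n → 𝕜) :
    (U * diagonal f * star U * (V * diagonal g * star V)).trace =
      ∑ i, ∑ j, ((‖(star U * V) i j‖ ^ 2 : ℝ) : 𝕜) * (f i * g j) := by
  set W := star U * V
  have hcycle : (U * diagonal f * star U * (V * diagonal g * star V)).trace =
      (star W * diagonal f * W * diagonal g).trace := by
    rw [← Matrix.mul_assoc, trace_mul_comm]
    simp only [W, star_mul, star_star, Matrix.mul_assoc]
  rw [hcycle, trace]
  simp only [diag_apply, mul_diagonal]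
  simp only [mul_apply, star_apply, diagonal_apply, mul_ite, mul_zero,
    Finset.sum_ite_eq', Finset.mem_univ, if_true, Finset.sum_mul]
  rw [Finset.sum_comm]
  refine Finset.sum_congr rfl fun i _ => Finset.sum_congr rfl fun j _ => ?_
  rw [RCLike.star_def, RCLike.ofReal_pow, ← RCLike.conj_mul]
  ring

lemma conj_diagonal_eq_of_apply_ne_zero {U V : Matrix n n 𝕜} (hU : U ∈ unitaryGroup n 𝕜)
    (hV : V ∈ unitaryGroup n 𝕜) {f g : n → 𝕜} (h : ∀ i j, (star U * V) i j ≠ 0 → f i = g j) :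
    U * diagonal f * star U = V * diagonal g * star V := by
  have hcomm : diagonal f * (star U * V) = star U * V * diagonal g := by
    ext i j
    rw [diagonal_mul, mul_diagonal]
    by_cases hij : (star U * V) i j = 0
    · simp only [hij, mul_zero, zero_mul]
    · rw [h i j hij, mul_comm]
  calc U * diagonal f * star U = U * (diagonal f * (star U * V)) * star V := by
        simp only [Matrix.mul_assoc, Unitary.mul_star_self_of_mem hV, Matrix.mul_one]
    _ = V * diagonal g * star V := by
        rw [hcomm, ← Matrix.mul_assoc U, ← Matrix.mul_assoc U, Unitary.mul_star_self_of_mem hU,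
          Matrix.one_mul]

lemma IsHermitian.eq_conj_diagonal_eigenvalues {A : Matrix n n 𝕜} (hA : A.IsHermitian) :
    A = (hA.eigenvectorUnitary : Matrix n n 𝕜) * diagonal (fun i => (hA.eigenvalues i : 𝕜)) *
      star (hA.eigenvectorUnitary : Matrix n n 𝕜) := by
  conv_lhs => rw [hA.spectral_theorem, Unitary.conjStarAlgAut_apply]
  rfl

lemma IsHermitian.sum_eigenvalues_eq_one_of_trace_eq_one {A : Matrix n n 𝕜}
    (hA : A.IsHermitian) (h : A.trace = 1) : ∑ i, hA.eigenvalues i = 1 := by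
  rw [hA.trace_eq_sum_eigenvalues, ← RCLike.ofReal_sum, ← RCLike.ofReal_one,
    RCLike.ofReal_inj] at h
  exact h

end Matrix

lemma mpow_eq_of_ne_zero {d : ℕ} {A : Matrix (Fin d) (Fin d) ℂ} (hA : A.IsHermitian) {β : ℝ}
    (hβ : β ≠ 0) :
    mpow A β = (hA.eigenvectorUnitary : Matrix (Fin d) (Fin d) ℂ) *
      diagonal (fun i => ((hA.eigenvalues i ^ β : ℝ) : ℂ)) *
      star (hA.eigenvectorUnitary : Matrix (Fin d) (Fin d) ℂ) := by
  rw [mpow, dif_pos hA]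
  congr 3
  funext i
  split_ifs with h
  · rw [h, Real.zero_rpow hβ]
  · rfl

lemma re_trace_mpow_mul_mpow {d : ℕ} {A B : Matrix (Fin d) (Fin d) ℂ} (hA : A.IsHermitian)
    (hB : B.IsHermitian) {β γ : ℝ} (hβ : β ≠ 0) (hγ : γ ≠ 0) :
    ((mpow A β * mpow B γ).trace).re =
      ∑ i, ∑ j, ‖(star (hA.eigenvectorUnitary : Matrix (Fin d) (Fin d) ℂ) *
        hB.eigenvectorUnitary) i j‖ ^ 2 * (hA.eigenvalues i ^ β * hB.eigenvalues j ^ γ) := by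
  rw [mpow_eq_of_ne_zero hA hβ, mpow_eq_of_ne_zero hB hγ,
    trace_conj_diagonal_mul_conj_diagonal, ← Complex.ofReal_re (∑ i, ∑ j, _)]
  push_cast
  rfl

/-- **Positivity of the relative Rényi `α`-entropy.**
For density matrices `ρ, σ` with `σ` positive definite and `α > 1`:
`D_α(ρ‖σ) = (1/(α−1)) log₂ tr(ρ^α σ^{1−α}) ≥ 0`, equivalently `tr(ρ^α σ^{1−α}) ≥ 1`,
with equality iff `ρ = σ`. -/
theorem renyi_relative_entropy_nonneg
    (d : ℕ) (ρ σ : Matrix (Fin d) (Fin d) ℂ)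
    (hρ_psd : ρ.PosSemidef) (hρ_tr : ρ.trace = 1)
    (hσ_pd : σ.PosDef) (hσ_tr : σ.trace = 1)
    (α : ℝ) (hα : 1 < α) :
    0 ≤ (1 / (α - 1)) * Real.logb 2 ((mpow ρ α * mpow σ (1 - α)).trace).re ∧
    1 ≤ ((mpow ρ α * mpow σ (1 - α)).trace).re ∧
    (((mpow ρ α * mpow σ (1 - α)).trace).re = 1 ↔ ρ = σ) := by
  have hρ : ρ.IsHermitian := hρ_psd.1
  have hσ : σ.IsHermitian := hσ_pd.1
  set U : Matrix (Fin d) (Fin d) ℂ := ↑hρ.eigenvectorUnitary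
  set V : Matrix (Fin d) (Fin d) ℂ := ↑hσ.eigenvectorUnitary
  have hW : star U * V ∈ unitaryGroup (Fin d) ℂ :=
    Submonoid.mul_mem _ (Unitary.star_mem (SetLike.coe_mem _)) (SetLike.coe_mem _)
  have hp1 := hρ.sum_eigenvalues_eq_one_of_trace_eq_one hρ_tr
  have hq1 := hσ.sum_eigenvalues_eq_one_of_trace_eq_one hσ_tr
  have hrow := sum_norm_sq_apply_right_of_mem_unitaryGroup hW
  have hcol := sum_norm_sq_apply_left_of_mem_unitaryGroup hW
  have hone := Real.one_le_sum_mul_rpow_mul_rpow_one_sub hα hρ_psd.eigenvalues_nonneg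
    hσ_pd.eigenvalues_pos hp1 hq1 (fun i j => by positivity) hrow hcol
  have heq := Real.sum_mul_rpow_mul_rpow_one_sub_eq_one_iff hα hρ_psd.eigenvalues_nonneg
    hσ_pd.eigenvalues_pos hp1 hq1 (fun i j => by positivity) hrow hcol
  rw [re_trace_mpow_mul_mpow hρ hσ (by linarith) (by linarith)]
  refine ⟨mul_nonneg (one_div_nonneg.2 (by linarith)) (Real.logb_nonneg one_lt_two hone),
    hone, heq.trans ⟨fun h => ?_, ?_⟩⟩
  · rw [hρ.eq_conj_diagonal_eigenvalues, hσ.eq_conj_diagonal_eigenvalues]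
    exact conj_diagonal_eq_of_apply_ne_zero (SetLike.coe_mem _) (SetLike.coe_mem _)
      fun i j hij => congrArg _ (h i j (by positivity))
  · rintro rfl i j hij
    have hUV : star U * V = 1 := Unitary.star_mul_self_of_mem (SetLike.coe_mem _)
    obtain rfl : i = j := by
      by_contra hne
      simp [hUV, one_apply_ne hne] at hij
    rfl
end

section
/- Let α > 1, let p be a probability vector on Fin m, let ρ_1, …, ρ_m be density matrices on ℂ^d, and let σ be a positive definite density matrix on ℂ^d. Set ζ := (Σ_x p_x ρ_x^α)^{1/α} and μ := ζ / tr(ζ). Then (1/(α−1)) · log₂ tr((Σ_x p_x ρ_x^α) σ^{1−α}) = (α/(α−1)) · log₂ tr(ζ) + (1/(α−1)) · log₂ tr(μ^α σ^{1−α}). (Equivalently: D_α(ρ_{XQ}‖ρ_X ⊗ σ) = D_α(ρ_{XQ}‖ρ_X ⊗ μ) + D_α(μ‖σ) for the cq-state ρ_{XQ} associated with the ensemble {p_x, ρ_x}.) -/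
open Matrix ComplexOrder

/-! Since `μ` is a positive multiple of `ζ` and `ζ ^ α = ∑ x, p x • ρ x ^ α`, the matrix power
`μ ^ α` equals `tr(ζ)^(-α) • ∑ x, p x • ρ x ^ α`. Taking `log₂` of `tr(μ^α σ^(1-α))` therefore
splits off `-α log₂ tr ζ`, which cancels the first term on the right. What remains is to see that
every trace involved is a positive real, which holds because `∑ x, p x • ρ x ^ α` is a nonzero
positive semidefinite matrix and `σ ^ (1 - α)` is positive definite. -/

open scoped MatrixOrder

namespace Matrix

variable {n 𝕜 : Type*} [Fintype n] [RCLike 𝕜]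

lemma PosSemidef.trace_pos {A : Matrix n n 𝕜} (hA : A.PosSemidef) (h : A ≠ 0) :
    0 < A.trace :=
  hA.trace_nonneg.lt_of_ne' (mt hA.trace_eq_zero_iff.mp h)

lemma PosSemidef.trace_mul_posDef_pos [DecidableEq n] {A B : Matrix n n 𝕜}
    (hA : A.PosSemidef) (hA0 : A ≠ 0) (hB : B.PosDef) : 0 < (A * B).trace := by
  set C := CFC.sqrt B
  have hC : C.PosSemidef := (CFC.sqrt_nonneg B).posSemidef
  have hCC : C * C = B := CFC.sqrt_mul_sqrt_self B hB.posSemidef.nonneg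
  have hCunit : IsUnit C := isUnit_of_mul_isUnit_left (hCC ▸ hB.isUnit)
  have htr : (A * B).trace = (Cᴴ * A * C).trace := by
    rw [← hCC, hC.1.eq, ← Matrix.mul_assoc, trace_mul_cycle]
  rw [htr]
  refine (hA.conjTranspose_mul_mul_same C).trace_pos fun h => hA0 ?_
  exact hCunit.star.mul_right_eq_zero.mp (hCunit.mul_left_eq_zero.mp h)

lemma sum_ofReal_smul_ne_zero_of_posSemidef {ι : Type*} [Fintype ι] {p : ι → ℝ}
    (hp : ∀ i, 0 ≤ p i) (hp0 : ∑ i, p i ≠ 0) {A : ι → Matrix n n 𝕜}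
    (hA : ∀ i, (A i).PosSemidef) (hA0 : ∀ i, A i ≠ 0) :
    ∑ i, (p i : 𝕜) • A i ≠ 0 := by
  obtain ⟨j, -, hj⟩ := Finset.exists_ne_zero_of_sum_ne_zero hp0
  have hpos : 0 < (∑ i, (p i : 𝕜) • A i).trace := by
    simp only [trace_sum, trace_smul, smul_eq_mul]
    refine Finset.sum_pos' (fun i _ => mul_nonneg ?_ (hA i).trace_nonneg)
      ⟨j, Finset.mem_univ j, ?_⟩
    · exact RCLike.ofReal_nonneg.mpr (hp i)
    · exact mul_pos (RCLike.ofReal_pos.mpr ((hp j).lt_of_ne' hj)) ((hA j).trace_pos (hA0 j))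
  exact fun h => hpos.ne' (by rw [h, trace_zero])

end Matrix

section MatrixPower

variable {d : ℕ} {A : Matrix (Fin d) (Fin d) ℂ}

lemma mpow_eq_cfc (hA : A.IsHermitian) (β : ℝ) :
    mpow A β = cfc (fun x : ℝ => if x = 0 then 0 else x ^ β) A := by
  rw [hA.cfc_eq, mpow, dif_pos hA, Matrix.IsHermitian.cfc]
  rfl

@[simp]
lemma mpow_zero_left (β : ℝ) : mpow (0 : Matrix (Fin d) (Fin d) ℂ) β = 0 := by
  simp [mpow_eq_cfc isHermitian_zero]

lemma mpow_one (hA : A.IsHermitian) : mpow A 1 = A := by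
  rw [mpow_eq_cfc hA]
  conv_rhs => rw [← cfc_id ℝ A hA]
  refine cfc_congr fun x _ => ?_
  split_ifs with hx <;> simp [hx]

lemma mpow_posSemidef (hA : A.PosSemidef) (β : ℝ) : (mpow A β).PosSemidef := by
  rw [mpow_eq_cfc hA.1, ← nonneg_iff_posSemidef]
  refine cfc_nonneg fun x hx => ?_
  split_ifs
  · rfl
  · exact Real.rpow_nonneg (spectrum_nonneg_of_nonneg hA.nonneg hx) β

lemma mpow_posDef (hA : A.PosDef) (β : ℝ) : (mpow A β).PosDef := by
  refine (mpow_posSemidef hA.posSemidef β).posDef_iff_isUnit.mpr ?_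
  rw [mpow_eq_cfc hA.1,
    isUnit_cfc_iff _ _ (finite_real_spectrum.continuousOn _) hA.1.isSelfAdjoint]
  intro x hx
  have hx0 : 0 < x := (isStrictlyPositive_iff_posDef.mpr hA).spectrum_pos hx
  simp [hx0.ne', (Real.rpow_pos_of_pos hx0 β).ne']

lemma mpow_mpow (hA : A.PosSemidef) (β γ : ℝ) : mpow (mpow A β) γ = mpow A (β * γ) := by
  rw [mpow_eq_cfc (mpow_posSemidef hA β).1, mpow_eq_cfc hA.1, mpow_eq_cfc hA.1,
    ← cfc_comp _ _ A hA.1.isSelfAdjoint ((finite_real_spectrum.image _).continuousOn _)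
      (finite_real_spectrum.continuousOn _)]
  refine cfc_congr fun x hx => ?_
  obtain hx0 | hx0 := (spectrum_nonneg_of_nonneg hA.nonneg hx).eq_or_lt
  · simp [← hx0]
  · simp [hx0.ne', (Real.rpow_pos_of_pos hx0 β).ne', ← Real.rpow_mul hx0.le]

lemma mpow_eq_zero_iff (hA : A.PosSemidef) {β : ℝ} (hβ : β ≠ 0) :
    mpow A β = 0 ↔ A = 0 := by
  refine ⟨fun h => ?_, fun h => h ▸ mpow_zero_left β⟩
  rw [← mpow_one hA.1, ← mul_inv_cancel₀ hβ, ← mpow_mpow hA, h, mpow_zero_left]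

lemma mpow_ofReal_smul (hA : A.PosSemidef) {r : ℝ} (hr : 0 < r) (β : ℝ) :
    mpow ((r : ℂ) • A) β = ((r ^ β : ℝ) : ℂ) • mpow A β := by
  rw [Complex.coe_smul, Complex.coe_smul,
    mpow_eq_cfc ((IsSelfAdjoint.all r).smul hA.1.isSelfAdjoint), mpow_eq_cfc hA.1,
    ← cfc_comp_smul r _ A ((finite_real_spectrum.image _).continuousOn _) hA.1.isSelfAdjoint,
    ← cfc_const_mul _ _ A (finite_real_spectrum.continuousOn _)]
  refine cfc_congr fun x hx => ?_
  obtain hx0 | hx0 := (spectrum_nonneg_of_nonneg hA.nonneg hx).eq_or_lt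
  · simp [← hx0]
  · simp [hx0.ne', hr.ne', Real.mul_rpow hr.le hx0.le]

end MatrixPower

theorem renyi_relative_entropy_cq_decomposition_general
    (d m : ℕ) (α : ℝ) (hα : 1 < α)
    (p : Fin m → ℝ) (hp_nonneg : ∀ x, 0 ≤ p x) (hp_sum : ∑ x, p x = 1)
    (ρ : Fin m → Matrix (Fin d) (Fin d) ℂ)
    (hρ_psd : ∀ x, (ρ x).PosSemidef) (hρ_tr : ∀ x, (ρ x).trace = 1)
    (σ : Matrix (Fin d) (Fin d) ℂ) (hσ_pd : σ.PosDef)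
    (ζ μ : Matrix (Fin d) (Fin d) ℂ)
    (hζ : ζ = mpow (∑ x, (p x : ℂ) • mpow (ρ x) α) (1 / α))
    (hμ : μ = (ζ.trace)⁻¹ • ζ) :
    (1 / (α - 1)) *
        Real.logb 2 (((∑ x, (p x : ℂ) • mpow (ρ x) α) * mpow σ (1 - α)).trace).re =
      (α / (α - 1)) * Real.logb 2 ((ζ.trace).re) +
        (1 / (α - 1)) * Real.logb 2 ((mpow μ α * mpow σ (1 - α)).trace).re := by
  have hα0 : α ≠ 0 := by positivity
  set S := ∑ x, (p x : ℂ) • mpow (ρ x) α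
  have hS : S.PosSemidef := posSemidef_sum _ fun x _ =>
    (mpow_posSemidef (hρ_psd x) α).smul (Complex.zero_le_real.mpr (hp_nonneg x))
  have hρα : ∀ x, mpow (ρ x) α ≠ 0 := fun x =>
    (mpow_eq_zero_iff (hρ_psd x) hα0).not.mpr fun h => by simpa [h] using hρ_tr x
  have hS0 : S ≠ 0 := sum_ofReal_smul_ne_zero_of_posSemidef hp_nonneg (hp_sum ▸ one_ne_zero)
    (fun x => mpow_posSemidef (hρ_psd x) α) hρα
  have hζS : mpow ζ α = S := by rw [hζ, mpow_mpow hS, one_div_mul_cancel hα0, mpow_one hS.1]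
  have hζpsd : ζ.PosSemidef := hζ ▸ mpow_posSemidef hS _
  have hζ0 : ζ ≠ 0 := fun h => hS0 (by rw [← hζS, h, mpow_zero_left])
  obtain ⟨t, ht, htr⟩ : ∃ t > (0 : ℝ), (t : ℂ) = ζ.trace :=
    RCLike.pos_iff_exists_ofReal.mp (hζpsd.trace_pos hζ0)
  obtain ⟨T, hT, hTr⟩ : ∃ T > (0 : ℝ), (T : ℂ) = (S * mpow σ (1 - α)).trace :=
    RCLike.pos_iff_exists_ofReal.mp (hS.trace_mul_posDef_pos hS0 (mpow_posDef hσ_pd (1 - α)))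
  have hμα : mpow μ α = ((t⁻¹ ^ α : ℝ) : ℂ) • S := by
    rw [hμ, ← htr, ← Complex.ofReal_inv, mpow_ofReal_smul hζpsd (inv_pos.mpr ht), hζS]
  rw [hμα, smul_mul_assoc, trace_smul, ← hTr, ← htr, smul_eq_mul, ← Complex.ofReal_mul]
  simp only [Complex.ofReal_re]
  rw [Real.logb_mul (by positivity) hT.ne', Real.inv_rpow ht.le, Real.logb_inv,
    Real.logb_rpow_eq_mul_logb_of_pos ht]
  ring

/-- **Decomposition of the relative `α`-entropy of a cq-state.**
With `ζ = (∑ x, p x • ρ x ^ α)^(1/α)` and `μ = ζ / tr ζ`: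
`D_α(ρ_{XQ}‖ρ_X ⊗ σ) = D_α(ρ_{XQ}‖ρ_X ⊗ μ) + D_α(μ‖σ)`, i.e.
`(1/(α−1)) log₂ tr((∑ x, p x • ρ x^α) σ^{1−α})
  = (α/(α−1)) log₂ tr ζ + (1/(α−1)) log₂ tr(μ^α σ^{1−α})`. -/
theorem renyi_relative_entropy_cq_decomposition
    (d m : ℕ) (α : ℝ) (hα : 1 < α)
    (p : Fin m → ℝ) (hp_nonneg : ∀ x, 0 ≤ p x) (hp_sum : ∑ x, p x = 1)
    (ρ : Fin m → Matrix (Fin d) (Fin d) ℂ)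
    (hρ_psd : ∀ x, (ρ x).PosSemidef) (hρ_tr : ∀ x, (ρ x).trace = 1)
    (σ : Matrix (Fin d) (Fin d) ℂ) (hσ_pd : σ.PosDef) (hσ_tr : σ.trace = 1)
    (ζ μ : Matrix (Fin d) (Fin d) ℂ)
    (hζ : ζ = mpow (∑ x, (p x : ℂ) • mpow (ρ x) α) (1 / α))
    (hμ : μ = (ζ.trace)⁻¹ • ζ) :
    (1 / (α - 1)) *
        Real.logb 2 (((∑ x, (p x : ℂ) • mpow (ρ x) α) * mpow σ (1 - α)).trace).re =
      (α / (α - 1)) * Real.logb 2 ((ζ.trace).re) +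
        (1 / (α - 1)) * Real.logb 2 ((mpow μ α * mpow σ (1 - α)).trace).re :=
  renyi_relative_entropy_cq_decomposition_general d m α hα p hp_nonneg hp_sum ρ hρ_psd hρ_tr σ hσ_pd
    ζ μ hζ hμ
end

section
/- Let α > 1, let p be a probability vector on Fin m, let ρ_1, …, ρ_m be density matrices on ℂ^d, and let σ be a positive definite density matrix on ℂ^d. Set ζ := (Σ_x p_x ρ_x^α)^{1/α} and μ := ζ / tr(ζ). Then (1/(α−1)) · log₂ tr((Σ_x p_x ρ_x^α) σ^{1−α}) ≥ (α/(α−1)) · log₂ tr(ζ), i.e. D_α(ρ_{XQ}‖ρ_X ⊗ σ) ≥ χ_α({p_x, ρ_x}), with equality if and only if σ = μ. -/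
/-!
Diagonalise `∑ x, p x • ρ x ^ α = U diag(tᵢ ^ α) U⋆`, so that `ζ = U diag(tᵢ) U⋆` has trace
`T = ∑ tᵢ`, and `σ = V diag(bⱼ) V⋆`. With the doubly stochastic matrix `cᵢⱼ = |(U⋆V)ᵢⱼ|²`, the
trace in the Rényi divergence is `∑ᵢⱼ cᵢⱼ tᵢ ^ α bⱼ ^ (1 - α)`. Bernoulli's inequality gives
`s ^ α b ^ (1 - α) ≥ α s + (1 - α) b`, strictly unless `s = b`; for `s = tᵢ / T`, summed against
`cᵢⱼ`, the right side adds up to `1`. So the trace is at least `T ^ α`, with equality iff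
`tᵢ / T = bⱼ` whenever `cᵢⱼ ≠ 0`, that is, iff `σ = ζ / T = μ`.
-/

open Matrix ComplexOrder

namespace Real

variable {α s b : ℝ}

theorem mul_add_one_sub_mul_lt_rpow_mul_rpow (hα : 1 < α) (hs : 0 ≤ s) (hb : 0 < b)
    (hsb : s ≠ b) : α * s + (1 - α) * b < s ^ α * b ^ (1 - α) := by
  have hx : -1 ≤ s / b - 1 := by linarith [div_nonneg hs hb.le]
  have hx0 : s / b - 1 ≠ 0 := by rwa [sub_ne_zero, Ne, div_eq_one_iff_eq hb.ne']
  have hbern := one_add_mul_self_lt_rpow_one_add hx hx0 hα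
  rw [add_sub_cancel] at hbern
  calc α * s + (1 - α) * b = b * (1 + α * (s / b - 1)) := by field_simp; ring
    _ < b * (s / b) ^ α := mul_lt_mul_of_pos_left hbern hb
    _ = s ^ α * b ^ (1 - α) := by
      rw [div_rpow hs hb.le, rpow_sub hb, rpow_one]
      field_simp

theorem mul_add_one_sub_mul_eq_rpow_mul_rpow_iff (hα : 1 < α) (hs : 0 ≤ s) (hb : 0 < b) :
    α * s + (1 - α) * b = s ^ α * b ^ (1 - α) ↔ s = b := by
  refine ⟨fun h => by_contra fun hsb => ?_, fun h => ?_⟩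
  · exact (mul_add_one_sub_mul_lt_rpow_mul_rpow hα hs hb hsb).ne h
  · rw [h, ← rpow_add hb, add_sub_cancel, rpow_one]
    ring

theorem mul_add_one_sub_mul_le_rpow_mul_rpow (hα : 1 < α) (hs : 0 ≤ s) (hb : 0 < b) :
    α * s + (1 - α) * b ≤ s ^ α * b ^ (1 - α) := by
  rcases eq_or_ne s b with rfl | hsb
  · exact ((mul_add_one_sub_mul_eq_rpow_mul_rpow_iff hα hs hb).mpr rfl).le
  · exact (mul_add_one_sub_mul_lt_rpow_mul_rpow hα hs hb hsb).le

end Real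

section DoublyStochastic

variable {n : Type*} [Fintype n] [DecidableEq n] {c : Matrix n n ℝ}

theorem sum_sum_add_mul_of_mem_doublyStochastic (hc : c ∈ doublyStochastic ℝ n)
    (x y : ℝ) (s b : n → ℝ) :
    ∑ i, ∑ j, (x * s i + y * b j) * c i j = x * ∑ i, s i + y * ∑ j, b j := by
  simp only [add_mul, Finset.sum_add_distrib, mul_assoc, ← Finset.mul_sum]
  rw [Finset.sum_comm (f := fun i j => b j * c i j)]
  simp only [← Finset.mul_sum, sum_row_of_mem_doublyStochastic hc,
    sum_col_of_mem_doublyStochastic hc, mul_one]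

variable {α : ℝ} {s b : n → ℝ}

theorem one_le_sum_sum_rpow_mul_rpow_mul (hα : 1 < α) (hc : c ∈ doublyStochastic ℝ n)
    (hs : ∀ i, 0 ≤ s i) (hs1 : ∑ i, s i = 1) (hb : ∀ j, 0 < b j) (hb1 : ∑ j, b j = 1) :
    1 ≤ ∑ i, ∑ j, s i ^ α * b j ^ (1 - α) * c i j := by
  calc (1 : ℝ) = ∑ i, ∑ j, (α * s i + (1 - α) * b j) * c i j := by
        rw [sum_sum_add_mul_of_mem_doublyStochastic hc, hs1, hb1]; ring
    _ ≤ _ := Finset.sum_le_sum fun i _ => Finset.sum_le_sum fun j _ =>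
        mul_le_mul_of_nonneg_right (Real.mul_add_one_sub_mul_le_rpow_mul_rpow hα (hs i) (hb j))
          (nonneg_of_mem_doublyStochastic hc)

theorem sum_sum_rpow_mul_rpow_mul_eq_one_iff (hα : 1 < α) (hc : c ∈ doublyStochastic ℝ n)
    (hs : ∀ i, 0 ≤ s i) (hs1 : ∑ i, s i = 1) (hb : ∀ j, 0 < b j) (hb1 : ∑ j, b j = 1) :
    ∑ i, ∑ j, s i ^ α * b j ^ (1 - α) * c i j = 1 ↔ ∀ i j, c i j ≠ 0 → s i = b j := by
  set L : n → n → ℝ := fun i j => (α * s i + (1 - α) * b j) * c i j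
  set R : n → n → ℝ := fun i j => s i ^ α * b j ^ (1 - α) * c i j
  have hL : ∑ i, ∑ j, L i j = 1 := by
    rw [sum_sum_add_mul_of_mem_doublyStochastic hc, hs1, hb1]; ring
  have hLR : ∀ p ∈ (Finset.univ : Finset (n × n)), L p.1 p.2 ≤ R p.1 p.2 := fun p _ =>
    mul_le_mul_of_nonneg_right (Real.mul_add_one_sub_mul_le_rpow_mul_rpow hα (hs _) (hb _))
      (nonneg_of_mem_doublyStochastic hc)
  have hterm : ∀ i j, L i j = R i j ↔ (c i j ≠ 0 → s i = b j) := by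
    intro i j
    rcases eq_or_ne (c i j) 0 with h0 | h0
    · simp [L, R, h0]
    · simp only [L, R, mul_left_inj' h0, ne_eq, h0, not_false_eq_true, forall_const,
        Real.mul_add_one_sub_mul_eq_rpow_mul_rpow_iff hα (hs i) (hb j)]
  have key := Finset.sum_eq_sum_iff_of_le hLR
  simp only [Fintype.sum_prod_type', hL, Finset.mem_univ, forall_const, Prod.forall,
    hterm] at key
  exact eq_comm.trans key

end DoublyStochastic

namespace Matrix

theorem re_trace_sum_smul_pos {n ι : Type*} [Fintype n] [Fintype ι] {p : ι → ℝ}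
    (hp : ∀ x, 0 ≤ p x) (hp1 : ∑ x, p x = 1) {M : ι → Matrix n n ℂ}
    (hM : ∀ x, 0 < (M x).trace.re) :
    0 < (∑ x, (p x : ℂ) • M x).trace.re := by
  simp only [trace_sum, trace_smul, smul_eq_mul, Complex.re_sum, Complex.re_ofReal_mul]
  obtain ⟨x, -, hx⟩ := Finset.exists_lt_of_sum_lt (s := Finset.univ) (f := fun _ => (0 : ℝ))
    (by rw [hp1, Finset.sum_const_zero]; exact one_pos)
  exact Finset.sum_pos' (fun y _ => mul_nonneg (hp y) (hM y).le)
    ⟨x, Finset.mem_univ _, mul_pos hx (hM x)⟩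

theorem diagonal_mul_eq_mul_diagonal_iff {n R : Type*} [Fintype n] [DecidableEq n] [CommRing R]
    [IsDomain R] {f g : n → R} {W : Matrix n n R} :
    diagonal f * W = W * diagonal g ↔ ∀ i j, W i j ≠ 0 → f i = g j := by
  simp only [← Matrix.ext_iff, mul_diagonal, diagonal_mul]
  refine forall₂_congr fun i j => ⟨fun h hW => mul_right_cancel₀ hW (h.trans (mul_comm _ _)),
    fun h => ?_⟩
  by_cases hW : W i j = 0
  · simp [hW]
  · rw [h hW, mul_comm]

variable {n : Type*} [Fintype n] [DecidableEq n]

noncomputable def conjDiagonal (U : unitaryGroup n ℂ) (f : n → ℝ) : Matrix n n ℂ :=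
  (U : Matrix n n ℂ) * diagonal (fun i => (f i : ℂ)) * star (U : Matrix n n ℂ)

theorem IsHermitian.eq_conjDiagonal {A : Matrix n n ℂ} (hA : A.IsHermitian) :
    A = conjDiagonal hA.eigenvectorUnitary hA.eigenvalues := by
  conv_lhs => rw [hA.spectral_theorem]
  rfl

variable (U V : unitaryGroup n ℂ) (f g : n → ℝ)

theorem trace_conjDiagonal : (conjDiagonal U f).trace = ((∑ i, f i : ℝ) : ℂ) := by
  rw [conjDiagonal, trace_mul_cycle, Unitary.star_mul_self_of_mem U.2, one_mul, trace_diagonal]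
  push_cast
  rfl

theorem posSemidef_conjDiagonal {f : n → ℝ} (hf : ∀ i, 0 ≤ f i) :
    (conjDiagonal U f).PosSemidef := by
  have hD : (diagonal fun i => (f i : ℂ)).PosSemidef :=
    posSemidef_diagonal_iff.mpr fun i => Complex.zero_le_real.mpr (hf i)
  simpa [conjDiagonal, star_eq_conjTranspose] using
    hD.mul_mul_conjTranspose_same (U : Matrix n n ℂ)

theorem smul_conjDiagonal (c : ℝ) :
    (c : ℂ) • conjDiagonal U f = conjDiagonal U (c • f) := by
  have hD : diagonal (fun i => ((c • f) i : ℂ)) =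
      (c : ℂ) • diagonal (fun i => (f i : ℂ)) := by
    rw [← diagonal_smul]; congr; ext i; simp
  rw [conjDiagonal, conjDiagonal, hD, Matrix.mul_smul, Matrix.smul_mul]

theorem trace_conjDiagonal_mul_conjDiagonal :
    (conjDiagonal U f * conjDiagonal V g).trace = ((∑ i, ∑ j,
      f i * g j * Complex.normSq ((star (U : Matrix n n ℂ) * V) i j) : ℝ) : ℂ) := by
  set W := star (U : Matrix n n ℂ) * V
  have hconj : conjDiagonal U f * conjDiagonal V g = (U : Matrix n n ℂ) *
      (diagonal (fun i => (f i : ℂ)) * W * diagonal (fun j => (g j : ℂ)) * star W) *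
        star (U : Matrix n n ℂ) := by
    simp only [conjDiagonal, W, star_mul, star_star, mul_assoc,
      Unitary.mul_star_self_of_mem U.2, mul_one]
  rw [hconj, trace_mul_cycle, Unitary.star_mul_self_of_mem U.2, one_mul, trace]
  push_cast
  refine Finset.sum_congr rfl fun i _ => ?_
  rw [diag_apply, mul_apply]
  refine Finset.sum_congr rfl fun j _ => ?_
  rw [mul_diagonal, diagonal_mul, star_apply, Complex.star_def, ← Complex.mul_conj]
  ring

theorem conjDiagonal_eq_conjDiagonal_iff_diagonal_mul :
    conjDiagonal U f = conjDiagonal V g ↔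
      diagonal (fun i => (f i : ℂ)) * (star (U : Matrix n n ℂ) * V) =
        star (U : Matrix n n ℂ) * V * diagonal (fun j => (g j : ℂ)) := by
  set W := star (U : Matrix n n ℂ) * V
  have hUW : (U : Matrix n n ℂ) * W = V := by
    rw [← mul_assoc, Unitary.mul_star_self_of_mem U.2, one_mul]
  have hW : W * star W = 1 := Unitary.mul_star_self_of_mem (star U * V).2
  constructor
  · intro h
    have hf : star (U : Matrix n n ℂ) * conjDiagonal U f * V =
        diagonal (fun i => (f i : ℂ)) * W := by
      rw [conjDiagonal, ← mul_assoc, ← mul_assoc, Unitary.star_mul_self_of_mem U.2, one_mul,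
        mul_assoc]
    have hg : star (U : Matrix n n ℂ) * conjDiagonal V g * V =
        W * diagonal (fun j => (g j : ℂ)) := by
      simp only [conjDiagonal, W, mul_assoc, Unitary.star_mul_self_of_mem V.2, mul_one]
    rw [← hf, ← hg, h]
  · intro h
    calc conjDiagonal U f
        = U * (diagonal (fun i => (f i : ℂ)) * W * star W) * star (U : Matrix n n ℂ) := by
          rw [mul_assoc _ W, hW, mul_one]; rfl
      _ = (U * W) * diagonal (fun j => (g j : ℂ)) * star ((U : Matrix n n ℂ) * W) := by
          rw [h, star_mul (U : Matrix n n ℂ) W]; simp only [mul_assoc]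
      _ = conjDiagonal V g := by rw [hUW]; rfl

theorem conjDiagonal_eq_conjDiagonal_iff :
    conjDiagonal U f = conjDiagonal V g ↔
      ∀ i j, (star (U : Matrix n n ℂ) * V) i j ≠ 0 → f i = g j := by
  simp only [conjDiagonal_eq_conjDiagonal_iff_diagonal_mul, diagonal_mul_eq_mul_diagonal_iff,
    Complex.ofReal_inj]

theorem normSq_mem_doublyStochastic {W : Matrix n n ℂ} (hW : W ∈ unitaryGroup n ℂ) :
    of (fun i j => Complex.normSq (W i j)) ∈ doublyStochastic ℝ n := by
  refine mem_doublyStochastic_iff_sum.mpr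
    ⟨fun i j => Complex.normSq_nonneg _, fun i => ?_, fun j => ?_⟩
  · have := congrFun (congrFun (mem_unitaryGroup_iff.mp hW) i) i
    simp only [mul_apply, star_apply, one_apply_eq, Complex.star_def, Complex.mul_conj] at this
    simp only [of_apply]
    exact_mod_cast this
  · have := congrFun (congrFun (mem_unitaryGroup_iff'.mp hW) j) j
    simp only [mul_apply, star_apply, one_apply_eq, Complex.star_def,
      ← Complex.normSq_eq_conj_mul_self] at this
    simp only [of_apply]
    exact_mod_cast this

section Petz

variable {α : ℝ} (U V : unitaryGroup n ℂ) {t b : n → ℝ}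

theorem conjDiagonal_rpow_eq_smul (ht : ∀ i, 0 ≤ t i) {T : ℝ} (hT : 0 < T) :
    conjDiagonal U (fun i => t i ^ α) =
      ((T ^ α : ℝ) : ℂ) • conjDiagonal U (fun i => (T⁻¹ * t i) ^ α) := by
  rw [smul_conjDiagonal]
  congr 1
  ext i
  rw [Pi.smul_apply, smul_eq_mul, ← Real.mul_rpow hT.le (mul_nonneg (inv_nonneg.mpr hT.le) (ht i)),
    mul_inv_cancel_left₀ hT.ne']

theorem rpow_sum_le_re_trace_conjDiagonal_rpow_mul (hα : 1 < α) (ht : ∀ i, 0 ≤ t i)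
    (hT : 0 < ∑ i, t i) (hb : ∀ j, 0 < b j) (hb1 : ∑ j, b j = 1) :
    (∑ i, t i) ^ α ≤
      (conjDiagonal U (fun i => t i ^ α) * conjDiagonal V (fun j => b j ^ (1 - α))).trace.re := by
  rw [conjDiagonal_rpow_eq_smul U ht hT, Matrix.smul_mul, trace_smul, smul_eq_mul,
    Complex.re_ofReal_mul, trace_conjDiagonal_mul_conjDiagonal, Complex.ofReal_re]
  refine le_mul_of_one_le_right (by positivity) (one_le_sum_sum_rpow_mul_rpow_mul hα
    (normSq_mem_doublyStochastic (Submonoid.mul_mem _ (Unitary.star_mem U.2) V.2))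
    (fun i => mul_nonneg (inv_nonneg.mpr hT.le) (ht i)) ?_ hb hb1)
  rw [← Finset.mul_sum, inv_mul_cancel₀ hT.ne']

theorem re_trace_conjDiagonal_rpow_mul_eq_rpow_sum_iff (hα : 1 < α) (ht : ∀ i, 0 ≤ t i)
    (hT : 0 < ∑ i, t i) (hb : ∀ j, 0 < b j) (hb1 : ∑ j, b j = 1) :
    (conjDiagonal U (fun i => t i ^ α) * conjDiagonal V (fun j => b j ^ (1 - α))).trace.re =
        (∑ i, t i) ^ α ↔
      conjDiagonal V b = ((∑ i, t i : ℝ) : ℂ)⁻¹ • conjDiagonal U t := by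
  rw [conjDiagonal_rpow_eq_smul U ht hT, Matrix.smul_mul, trace_smul, smul_eq_mul,
    Complex.re_ofReal_mul, trace_conjDiagonal_mul_conjDiagonal, Complex.ofReal_re,
    mul_eq_left₀ (by positivity), ← Complex.ofReal_inv, smul_conjDiagonal,
    eq_comm (a := conjDiagonal V b), conjDiagonal_eq_conjDiagonal_iff]
  refine (sum_sum_rpow_mul_rpow_mul_eq_one_iff hα
    (normSq_mem_doublyStochastic (Submonoid.mul_mem _ (Unitary.star_mem U.2) V.2))
    (fun i => mul_nonneg (inv_nonneg.mpr hT.le) (ht i)) ?_ hb hb1).trans ?_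
  · rw [← Finset.mul_sum, inv_mul_cancel₀ hT.ne']
  · simp only [of_apply, ne_eq, Complex.normSq_eq_zero, Pi.smul_apply, smul_eq_mul]

end Petz

end Matrix

section MatrixPower

variable {d : ℕ} {A : Matrix (Fin d) (Fin d) ℂ} {β : ℝ}

theorem Matrix.IsHermitian.mpow_eq_conjDiagonal (hA : A.IsHermitian) (hβ : β ≠ 0) :
    mpow A β = conjDiagonal hA.eigenvectorUnitary (fun i => hA.eigenvalues i ^ β) := by
  rw [mpow, dif_pos hA, conjDiagonal]
  congr 3
  ext i
  split_ifs with h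
  · rw [h, Real.zero_rpow hβ]
  · rfl

theorem Matrix.PosSemidef.posSemidef_mpow (hA : A.PosSemidef) (hβ : β ≠ 0) :
    (mpow A β).PosSemidef := by
  rw [hA.1.mpow_eq_conjDiagonal hβ]
  exact posSemidef_conjDiagonal _ fun i => Real.rpow_nonneg (hA.eigenvalues_nonneg i) β

theorem Matrix.PosSemidef.re_trace_mpow_pos (hA : A.PosSemidef) (hA0 : A.trace ≠ 0)
    (hβ : β ≠ 0) : 0 < (mpow A β).trace.re := by
  rw [hA.1.mpow_eq_conjDiagonal hβ, trace_conjDiagonal, Complex.ofReal_re]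
  obtain ⟨i, -, hi⟩ : ∃ i ∈ Finset.univ, hA.1.eigenvalues i ≠ 0 := by
    refine Finset.exists_ne_zero_of_sum_ne_zero fun h => hA0 ?_
    rw [hA.1.trace_eq_sum_eigenvalues, ← RCLike.ofReal_sum, h, RCLike.ofReal_zero]
  exact Finset.sum_pos' (fun j _ => Real.rpow_nonneg (hA.eigenvalues_nonneg j) β)
    ⟨i, Finset.mem_univ _, Real.rpow_pos_of_pos ((hA.eigenvalues_nonneg i).lt_of_ne' hi) β⟩

theorem Matrix.PosSemidef.exists_mpow_one_div_eq_conjDiagonal (hA : A.PosSemidef) {α : ℝ}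
    (hα : α ≠ 0) :
    ∃ (U : unitaryGroup (Fin d) ℂ) (t : Fin d → ℝ), (∀ i, 0 ≤ t i) ∧
      A = conjDiagonal U (fun i => t i ^ α) ∧ mpow A (1 / α) = conjDiagonal U t := by
  refine ⟨_, _, fun i => Real.rpow_nonneg (hA.eigenvalues_nonneg i) _, ?_,
    hA.1.mpow_eq_conjDiagonal (one_div_ne_zero hα)⟩
  conv_lhs => rw [hA.1.eq_conjDiagonal]
  simp only [one_div, Real.rpow_inv_rpow (hA.eigenvalues_nonneg _) hα]

theorem Matrix.PosDef.exists_mpow_eq_conjDiagonal (hA : A.PosDef) (hβ : β ≠ 0) :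
    ∃ (V : unitaryGroup (Fin d) ℂ) (b : Fin d → ℝ), (∀ j, 0 < b j) ∧
      A = conjDiagonal V b ∧ mpow A β = conjDiagonal V (fun j => b j ^ β) :=
  ⟨_, _, hA.eigenvalues_pos, hA.1.eq_conjDiagonal, hA.1.mpow_eq_conjDiagonal hβ⟩

end MatrixPower

namespace Real

variable {b α T S : ℝ}

theorem div_sub_one_mul_logb_eq (hT : 0 < T) :
    α / (α - 1) * logb b T = 1 / (α - 1) * logb b (T ^ α) := by
  rw [logb_rpow_eq_mul_logb_of_pos hT]
  ring

theorem div_sub_one_mul_logb_le_of_rpow_le (hb : 1 < b) (hα : 1 < α) (hT : 0 < T)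
    (hTS : T ^ α ≤ S) : α / (α - 1) * logb b T ≤ 1 / (α - 1) * logb b S := by
  rw [div_sub_one_mul_logb_eq hT]
  have hα1 : 0 < 1 / (α - 1) := one_div_pos.mpr (sub_pos.mpr hα)
  exact mul_le_mul_of_nonneg_left (logb_le_logb_of_le hb (by positivity) hTS) hα1.le

theorem one_div_sub_one_mul_logb_eq_iff (hb : 1 < b) (hα : 1 < α) (hT : 0 < T) (hS : 0 < S) :
    1 / (α - 1) * logb b S = α / (α - 1) * logb b T ↔ S = T ^ α := by
  rw [div_sub_one_mul_logb_eq hT, mul_right_inj' (one_div_ne_zero (sub_pos.mpr hα).ne')]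
  exact (logb_injOn_pos hb).eq_iff hS (by positivity : (0 : ℝ) < T ^ α)

end Real

/-- **The `α`-Holevo quantity lower-bounds the relative `α`-entropy to product states.**
With `ζ = (∑ x, p x • ρ x ^ α)^(1/α)` and `μ = ζ / tr ζ`:
`D_α(ρ_{XQ}‖ρ_X ⊗ σ) ≥ χ_α({p x, ρ x})`, i.e.
`(1/(α−1)) log₂ tr((∑ x, p x • ρ x^α) σ^{1−α}) ≥ (α/(α−1)) log₂ tr ζ`,
with equality iff `σ = μ`. -/
theorem renyi_relative_entropy_ge_chiAlpha
    (d m : ℕ) (α : ℝ) (hα : 1 < α)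
    (p : Fin m → ℝ) (hp_nonneg : ∀ x, 0 ≤ p x) (hp_sum : ∑ x, p x = 1)
    (ρ : Fin m → Matrix (Fin d) (Fin d) ℂ)
    (hρ_psd : ∀ x, (ρ x).PosSemidef) (hρ_tr : ∀ x, (ρ x).trace = 1)
    (σ : Matrix (Fin d) (Fin d) ℂ) (hσ_pd : σ.PosDef) (hσ_tr : σ.trace = 1)
    (ζ μ : Matrix (Fin d) (Fin d) ℂ)
    (hζ : ζ = mpow (∑ x, (p x : ℂ) • mpow (ρ x) α) (1 / α))
    (hμ : μ = (ζ.trace)⁻¹ • ζ) :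
    (α / (α - 1)) * Real.logb 2 ((ζ.trace).re) ≤
      (1 / (α - 1)) *
        Real.logb 2 (((∑ x, (p x : ℂ) • mpow (ρ x) α) * mpow σ (1 - α)).trace).re ∧
    ((1 / (α - 1)) *
        Real.logb 2 (((∑ x, (p x : ℂ) • mpow (ρ x) α) * mpow σ (1 - α)).trace).re =
      (α / (α - 1)) * Real.logb 2 ((ζ.trace).re) ↔ σ = μ) := by
  have hα0 : α ≠ 0 := by positivity
  have hα1 : 1 - α ≠ 0 := by linarith
  set A := ∑ x, (p x : ℂ) • mpow (ρ x) α
  have hA : A.PosSemidef := posSemidef_sum _ fun x _ =>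
    ((hρ_psd x).posSemidef_mpow hα0).smul (Complex.zero_le_real.mpr (hp_nonneg x))
  have hA0 : A.trace ≠ 0 := fun h => (re_trace_sum_smul_pos hp_nonneg hp_sum fun x =>
    (hρ_psd x).re_trace_mpow_pos (by rw [hρ_tr x]; exact one_ne_zero) hα0).ne'
      (by rw [h, Complex.zero_re])
  obtain ⟨U, t, ht, hAt, hζt⟩ := hA.exists_mpow_one_div_eq_conjDiagonal hα0
  obtain ⟨V, b, hb, hσb, hσα⟩ := hσ_pd.exists_mpow_eq_conjDiagonal hα1
  rw [← hζ] at hζt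
  have hT : 0 < ∑ i, t i := by
    have := hA.re_trace_mpow_pos hA0 (one_div_ne_zero hα0)
    rwa [← hζ, hζt, trace_conjDiagonal, Complex.ofReal_re] at this
  have hb1 : ∑ j, b j = 1 := by
    rw [hσb, trace_conjDiagonal] at hσ_tr
    exact_mod_cast hσ_tr
  have hle := rpow_sum_le_re_trace_conjDiagonal_rpow_mul U V hα ht hT hb hb1
  rw [hμ, hζt, hAt, hσα, trace_conjDiagonal, Complex.ofReal_re, hσb]
  exact ⟨Real.div_sub_one_mul_logb_le_of_rpow_le one_lt_two hα hT hle,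
    (Real.one_div_sub_one_mul_logb_eq_iff one_lt_two hα hT
      ((Real.rpow_pos_of_pos hT α).trans_le hle)).trans
        (re_trace_conjDiagonal_rpow_mul_eq_rpow_sum_iff U V hα ht hT hb hb1)⟩
end

section
/- Let α > 1, let p be a probability vector on Fin m, let ρ_1, …, ρ_m and ρ_0 be density matrices on ℂ^d, and let η ∈ [0,1]. Set χ_α := (α/(α−1)) · log₂ tr((Σ_x p_x ρ_x^α)^{1/α}), ζ' := ((1−η) Σ_x p_x ρ_x^α + η ρ_0^α)^{1/α}, μ' := ζ'/tr(ζ'), and χ'_α := (α/(α−1)) · log₂ tr(ζ'). Then χ'_α − χ_α ≥ η · ( (1/(α−1)) · log₂ tr(ρ_0^α (μ')^{1−α}) − χ_α ). (This is the inequality χ_α(ρ'_{XQ}) − χ_α(ρ_{XQ}) ≥ η (D_α(ρ_0‖μ_{α,Q}(ρ'_{XQ})) − χ_α(ρ_{XQ})) for the extended cq-state ρ'_{XQ} = (1−η) ρ_{XQ} + η |⊥⟩⟨⊥| ⊗ ρ_0.) -/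
/-!
Write `S = ∑ₓ pₓ ρₓ^α`, `P = ρ₀^α` and `M = (1-η) S + η P`, so that `ζ' = M^{1/α}`, and put
`T = tr ζ'`, `A = tr (S μ'^{1-α})`, `B = tr (P μ'^{1-α})`. Since `μ'` is a function of `M`,
`M μ'^{1-α} = T^{α-1} ζ'`, hence `(1-η) A + η B = T^α`. For a state `σ` with `ker σ ⊆ ker S`,
Jensen's inequality in the eigenbasis of `σ` followed by Hölder's inequality gives
`(tr S^{1/α})^α ≤ tr (S σ^{1-α})`; for `σ = μ'` the kernel condition holds once `η < 1`, and the
same bound for `P` gives `0 < B` once `η > 0`. The claim is then the concavity of `log`: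
`α log T = log ((1-η) A + η B) ≥ (1-η) α log tr S^{1/α} + η log B`.
-/

open Matrix ComplexOrder

theorem mpow_eq_cfc_rpow {d : ℕ} (A : Matrix (Fin d) (Fin d) ℂ) {β : ℝ} (hβ : β ≠ 0) :
    mpow A β = cfc (fun t : ℝ => t ^ β) A := by
  by_cases hA : A.IsHermitian
  · rw [hA.cfc_eq, IsHermitian.cfc, Unitary.conjStarAlgAut_apply, mpow, dif_pos hA]
    congr 3
    ext i
    by_cases hi : hA.eigenvalues i = 0 <;> simp [hi, Real.zero_rpow hβ]
  · rw [mpow, dif_neg hA]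
    exact (cfc_apply_of_not_predicate A hA).symm

namespace Real

theorem rpow_sum_rpow_inv_le_sum_mul_rpow_one_sub {ι : Type*} [Fintype ι] {s m : ι → ℝ}
    (hs : ∀ j, 0 ≤ s j) (hm : ∀ j, 0 ≤ m j) (hm1 : ∑ j, m j = 1)
    (hsupp : ∀ j, m j = 0 → s j = 0) {α : ℝ} (hα : 1 ≤ α) :
    (∑ j, s j ^ α⁻¹) ^ α ≤ ∑ j, s j * m j ^ (1 - α) := by
  have hα0 : α ≠ 0 := by positivity
  have hmean : ∀ j, m j * (s j ^ α⁻¹ / m j) = s j ^ α⁻¹ := fun j => by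
    obtain hmj | hmj := (hm j).eq_or_lt
    · simp [← hmj, hsupp j hmj.symm, hα0]
    · field_simp
  have hmean_rpow : ∀ j, m j * (s j ^ α⁻¹ / m j) ^ α = s j * m j ^ (1 - α) := fun j => by
    obtain hmj | hmj := (hm j).eq_or_lt
    · simp [← hmj, hsupp j hmj.symm]
    · rw [div_rpow (by have := hs j; positivity) hmj.le, ← rpow_mul (hs j),
        inv_mul_cancel₀ hα0, rpow_one, rpow_sub hmj, rpow_one]
      field_simp
  simpa only [hmean, hmean_rpow] using rpow_arith_mean_le_arith_mean_rpow Finset.univ m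
    (fun j => s j ^ α⁻¹ / m j) (fun j _ => hm j) hm1
    (fun j _ => by have := hs j; have := hm j; positivity) hα

theorem weighted_logb_le_logb_weighted {η a b c : ℝ} (hη0 : 0 ≤ η) (hη1 : η ≤ 1) (hc : 0 < c)
    (hca : η < 1 → c ≤ a) (hb : 0 < η → 0 < b) :
    (1 - η) * logb 2 c + η * logb 2 b ≤ logb 2 ((1 - η) * a + η * b) := by
  obtain rfl | hη0 := hη0.eq_or_lt
  · simpa using logb_le_logb_of_le one_lt_two hc (hca one_pos)
  obtain rfl | hη1 := hη1.eq_or_lt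
  · simp
  have ha := hca hη1
  have hb := hb hη0
  have hgm : c ^ (1 - η) * b ^ η ≤ (1 - η) * a + η * b :=
    calc c ^ (1 - η) * b ^ η ≤ a ^ (1 - η) * b ^ η := by gcongr
      _ ≤ (1 - η) * a + η * b :=
        geom_mean_le_arith_mean2_weighted (by linarith) hη0.le (hc.le.trans ha) hb.le (by ring)
  calc (1 - η) * logb 2 c + η * logb 2 b = logb 2 (c ^ (1 - η) * b ^ η) := by
        rw [logb_mul (by positivity) (by positivity), logb_rpow_eq_mul_logb_of_pos hc,
          logb_rpow_eq_mul_logb_of_pos hb]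
    _ ≤ _ := logb_le_logb_of_le one_lt_two (by positivity) hgm

end Real

theorem extension_inequality_of_mix_eq_rpow {α η c T A B : ℝ} (hα : 1 < α) (hη0 : 0 ≤ η)
    (hη1 : η ≤ 1) (hc : 0 < c) (hT : 0 < T) (hmix : (1 - η) * A + η * B = T ^ α)
    (hA : η < 1 → c ^ α ≤ A) (hB : 0 < η → 0 < B) :
    α / (α - 1) * Real.logb 2 T - α / (α - 1) * Real.logb 2 c ≥
      η * (1 / (α - 1) * Real.logb 2 B - α / (α - 1) * Real.logb 2 c) := by
  have key := Real.weighted_logb_le_logb_weighted hη0 hη1 (by positivity) hA hB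
  rw [hmix, Real.logb_rpow_eq_mul_logb_of_pos hc, Real.logb_rpow_eq_mul_logb_of_pos hT] at key
  have hα1 : 0 < α - 1 := by linarith
  have hdiff : α / (α - 1) * Real.logb 2 T - α / (α - 1) * Real.logb 2 c -
      η * (1 / (α - 1) * Real.logb 2 B - α / (α - 1) * Real.logb 2 c) =
      (α * Real.logb 2 T - ((1 - η) * (α * Real.logb 2 c) + η * Real.logb 2 B)) / (α - 1) := by
    ring
  rw [ge_iff_le, ← sub_nonneg, hdiff]
  exact div_nonneg (sub_nonneg.mpr key) hα1.le

namespace Matrix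

open Unitary

section
variable {n : Type*}

lemma posSemidef_sum_ofReal_smul {ι : Type*} [Fintype ι] {p : ι → ℝ} (hp : ∀ x, 0 ≤ p x)
    {X : ι → Matrix n n ℂ} (hX : ∀ x, (X x).PosSemidef) :
    (∑ x, (p x : ℂ) • X x).PosSemidef :=
  posSemidef_sum _ fun x _ => (hX x).smul (Complex.zero_le_real.2 (hp x))

variable [Fintype n]

lemma PosSemidef.mulVec_eq_zero_of_smul_add_smul {A B : Matrix n n ℂ} (hA : A.PosSemidef)
    (hB : B.PosSemidef) {a b : ℝ} (ha : 0 < a) (hb : 0 ≤ b) {v : n → ℂ}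
    (hv : ((a : ℂ) • A + (b : ℂ) • B) *ᵥ v = 0) : A *ᵥ v = 0 := by
  have haA := hA.smul (Complex.zero_le_real.2 ha.le)
  have hbB := hB.smul (Complex.zero_le_real.2 hb)
  have h := congrArg (star v ⬝ᵥ ·) hv
  simp only [add_mulVec, dotProduct_add, dotProduct_zero] at h
  have haAv := (haA.dotProduct_mulVec_zero_iff v).1 ((add_eq_zero_iff_of_nonneg
    (haA.dotProduct_mulVec_nonneg v) (hbB.dotProduct_mulVec_nonneg v)).mp h).1
  rw [smul_mulVec, smul_eq_zero] at haAv
  exact haAv.resolve_left (by exact_mod_cast ha.ne')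

lemma re_trace_sum_ofReal_smul_pos {ι : Type*} [Fintype ι] {p : ι → ℝ} (hp : ∀ x, 0 ≤ p x)
    (hp0 : 0 < ∑ x, p x) {X : ι → Matrix n n ℂ} (hX : ∀ x, 0 < (X x).trace.re) :
    0 < (∑ x, (p x : ℂ) • X x).trace.re := by
  obtain ⟨x, -, hx⟩ := Finset.exists_lt_of_sum_lt (s := Finset.univ) (f := 0) (g := p)
    (by simpa using hp0)
  simp only [trace_sum, trace_smul, Complex.re_sum, smul_eq_mul, Complex.re_ofReal_mul]
  exact Finset.sum_pos' (fun x _ => mul_nonneg (hp x) (hX x).le)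
    ⟨x, Finset.mem_univ x, mul_pos hx (hX x)⟩

end

variable {n : Type*} [Fintype n] [DecidableEq n] {A : Matrix n n ℂ}

lemma star_mul_diagonal_mul_apply_self (W : Matrix n n ℂ) (d : n → ℝ) (j : n) :
    (star W * diagonal (fun i => (d i : ℂ)) * W) j j =
      ((∑ i, Complex.normSq (W i j) * d i : ℝ) : ℂ) := by
  simp only [mul_apply, star_apply, diagonal_apply, mul_ite, mul_zero, Finset.sum_ite_eq',
    Finset.mem_univ, if_true]
  push_cast
  refine Finset.sum_congr rfl fun i _ => ?_
  rw [Complex.normSq_eq_conj_mul_self, Complex.star_def]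
  ring

lemma sum_normSq_apply_of_mem_unitaryGroup {W : Matrix n n ℂ} (hW : W ∈ unitaryGroup n ℂ)
    (j : n) : ∑ i, Complex.normSq (W i j) = 1 := by
  have := star_mul_diagonal_mul_apply_self W 1 j
  simp only [Pi.one_apply, Complex.ofReal_one, diagonal_one, mul_one,
    mem_unitaryGroup_iff'.mp hW, one_apply_eq] at this
  exact_mod_cast this.symm

lemma PosSemidef.nonneg_of_mem_spectrum (hA : A.PosSemidef) {t : ℝ} (ht : t ∈ spectrum ℝ A) :
    0 ≤ t := by
  rw [hA.1.spectrum_real_eq_range_eigenvalues] at ht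
  obtain ⟨i, rfl⟩ := ht
  exact hA.eigenvalues_nonneg i

open scoped MatrixOrder in
lemma PosSemidef.posSemidef_cfc (hA : A.PosSemidef) {f : ℝ → ℝ} (hf : ∀ t, 0 ≤ t → 0 ≤ f t) :
    (cfc f A).PosSemidef :=
  (cfc_nonneg fun _ ht => hf _ (hA.nonneg_of_mem_spectrum ht)).posSemidef

lemma PosSemidef.cfc_rpow (hA : A.PosSemidef) (β : ℝ) :
    (cfc (fun t : ℝ => t ^ β) A).PosSemidef :=
  hA.posSemidef_cfc fun _ ht => Real.rpow_nonneg ht β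

lemma IsHermitian.trace_cfc (hA : A.IsHermitian) (f : ℝ → ℝ) :
    (cfc f A).trace = ∑ i, (f (hA.eigenvalues i) : ℂ) := by
  rw [hA.cfc_eq, IsHermitian.cfc, conjStarAlgAut_apply, trace_mul_cycle, coe_star_mul_self,
    one_mul, trace_diagonal]
  rfl

lemma IsHermitian.ofReal_re_trace_cfc (hA : A.IsHermitian) (f : ℝ → ℝ) :
    ((cfc f A).trace.re : ℂ) = (cfc f A).trace := by
  simp [hA.trace_cfc]

lemma PosSemidef.re_trace_cfc_rpow_pos (hA : A.PosSemidef) (hA0 : 0 < A.trace.re) (β : ℝ) :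
    0 < (cfc (fun t : ℝ => t ^ β) A).trace.re := by
  obtain ⟨i, -, hi⟩ := Finset.exists_lt_of_sum_lt (s := Finset.univ) (f := 0)
    (g := hA.1.eigenvalues) (by simpa [hA.1.trace_eq_sum_eigenvalues] using hA0)
  simp only [hA.1.trace_cfc, Complex.re_sum, Complex.ofReal_re]
  exact Finset.sum_pos' (fun j _ => Real.rpow_nonneg (hA.eigenvalues_nonneg j) β)
    ⟨i, Finset.mem_univ i, Real.rpow_pos_of_pos hi β⟩

lemma IsHermitian.star_mul_cfc_mul_apply_self (hA : A.IsHermitian) (V : Matrix n n ℂ)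
    (f : ℝ → ℝ) (j : n) :
    (star V * cfc f A * V) j j = ((∑ i, Complex.normSq
      ((star (hA.eigenvectorUnitary : Matrix n n ℂ) * V) i j) * f (hA.eigenvalues i) : ℝ) : ℂ) := by
  rw [hA.cfc_eq, IsHermitian.cfc, conjStarAlgAut_apply, ← star_mul_diagonal_mul_apply_self]
  simp only [star_mul, star_star, mul_assoc]
  rfl

/-- Jensen's inequality for the concave `t ↦ t ^ r`. -/
lemma PosSemidef.re_star_mul_cfc_rpow_mul_apply_self_le (hA : A.PosSemidef)
    {V : Matrix n n ℂ} (hV : V ∈ unitaryGroup n ℂ) {r : ℝ} (hr0 : 0 ≤ r) (hr1 : r ≤ 1) (j : n) :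
    ((star V * cfc (fun t : ℝ => t ^ r) A * V) j j).re ≤ ((star V * A * V) j j).re ^ r := by
  have hW : star (hA.1.eigenvectorUnitary : Matrix n n ℂ) * V ∈ unitaryGroup n ℂ :=
    mul_mem (star_mem (SetLike.coe_mem _)) hV
  conv_rhs => rw [← cfc_id' ℝ A hA.1.isSelfAdjoint]
  simp only [hA.1.star_mul_cfc_mul_apply_self, Complex.ofReal_re]
  exact (Real.concaveOn_rpow hr0 hr1).le_map_sum (fun i _ => Complex.normSq_nonneg _)
    (sum_normSq_apply_of_mem_unitaryGroup hW j) (fun i _ => hA.eigenvalues_nonneg i)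

lemma trace_eq_sum_star_mul_mul_apply_self {V : Matrix n n ℂ} (hV : V ∈ unitaryGroup n ℂ)
    (X : Matrix n n ℂ) : X.trace = ∑ j, (star V * X * V) j j := by
  change X.trace = (star V * X * V).trace
  rw [trace_mul_cycle, mem_unitaryGroup_iff.mp hV, one_mul]

lemma IsHermitian.trace_mul_cfc {σ : Matrix n n ℂ} (hσ : σ.IsHermitian) (S : Matrix n n ℂ)
    (f : ℝ → ℝ) :
    (S * cfc f σ).trace = ∑ j, (star (hσ.eigenvectorUnitary : Matrix n n ℂ) * S *
      hσ.eigenvectorUnitary) j j * f (hσ.eigenvalues j) := by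
  rw [hσ.cfc_eq, IsHermitian.cfc, conjStarAlgAut_apply, ← mul_assoc, trace_mul_cycle,
    ← mul_assoc]
  simp [trace, mul_diagonal]

lemma IsHermitian.star_mul_mul_eigenvectorUnitary_apply_self_eq_zero {S σ : Matrix n n ℂ}
    (hσ : σ.IsHermitian) (hker : ∀ v, σ *ᵥ v = 0 → S *ᵥ v = 0) {j : n}
    (hj : hσ.eigenvalues j = 0) :
    (star (hσ.eigenvectorUnitary : Matrix n n ℂ) * S * hσ.eigenvectorUnitary) j j = 0 := by
  set V := (hσ.eigenvectorUnitary : Matrix n n ℂ)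
  have hv : σ *ᵥ (V *ᵥ Pi.single j 1) = 0 := by
    rw [hσ.eigenvectorUnitary_mulVec, hσ.mulVec_eigenvectorBasis, hj, zero_smul]
  have hSv : (star V * S * V) *ᵥ Pi.single j 1 = 0 := by
    rw [← mulVec_mulVec, ← mulVec_mulVec, hker _ hv, mulVec_zero]
  simpa [mulVec_single_one] using congrFun hSv j

lemma PosSemidef.re_trace_cfc_rpow_inv_rpow_le {S σ : Matrix n n ℂ} (hS : S.PosSemidef)
    (hσ : σ.PosSemidef) (hσ1 : σ.trace = 1) (hker : ∀ v, σ *ᵥ v = 0 → S *ᵥ v = 0)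
    {α : ℝ} (hα : 1 ≤ α) :
    (cfc (fun t : ℝ => t ^ α⁻¹) S).trace.re ^ α ≤
      (S * cfc (fun t : ℝ => t ^ (1 - α)) σ).trace.re := by
  set V := (hσ.1.eigenvectorUnitary : Matrix n n ℂ)
  have hV : V ∈ unitaryGroup n ℂ := SetLike.coe_mem _
  set s : n → ℝ := fun j => ((star V * S * V) j j).re
  have hs : ∀ j, 0 ≤ s j := fun j => by
    simpa [s, star_eq_conjTranspose] using
      (Complex.nonneg_iff.mp ((hS.conjTranspose_mul_mul_same V).diag_nonneg (i := j))).1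
  have hm1 : ∑ j, hσ.1.eigenvalues j = 1 := by
    simpa [hσ.1.trace_eq_sum_eigenvalues] using congrArg Complex.re hσ1
  have hsupp : ∀ j, hσ.1.eigenvalues j = 0 → s j = 0 := fun j hj => by
    simp [s, V, hσ.1.star_mul_mul_eigenvectorUnitary_apply_self_eq_zero hker hj]
  have hjensen : (cfc (fun t : ℝ => t ^ α⁻¹) S).trace.re ≤ ∑ j, s j ^ α⁻¹ := by
    rw [trace_eq_sum_star_mul_mul_apply_self hV, Complex.re_sum]
    exact Finset.sum_le_sum fun j _ => hS.re_star_mul_cfc_rpow_mul_apply_self_le hV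
      (by positivity) (inv_le_one_of_one_le₀ hα) j
  have htrace : (S * cfc (fun t : ℝ => t ^ (1 - α)) σ).trace.re =
      ∑ j, s j * hσ.1.eigenvalues j ^ (1 - α) := by
    simp [hσ.1.trace_mul_cfc, s, V]
  rw [htrace]
  calc _ ≤ (∑ j, s j ^ α⁻¹) ^ α := by
        gcongr
        exact (Complex.nonneg_iff.mp (hS.cfc_rpow α⁻¹).trace_nonneg).1
    _ ≤ _ := Real.rpow_sum_rpow_inv_le_sum_mul_rpow_one_sub hs hσ.eigenvalues_nonneg hm1 hsupp hα

lemma IsHermitian.cfc_mulVec_eq_zero (hA : A.IsHermitian) {f : ℝ → ℝ} (hf : f 0 = 0)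
    {v : n → ℂ} (hv : A *ᵥ v = 0) : cfc f A *ᵥ v = 0 := by
  have hfactor : cfc f A = cfc (fun t => f t / t) A * A :=
    calc cfc f A = cfc (fun t => f t / t * t) A := cfc_congr fun t _ => by
          obtain rfl | ht := eq_or_ne t 0
          · simp [hf]
          · field_simp
      _ = cfc (fun t => f t / t) A * A := by
          rw [cfc_mul _ _ A (A.finite_real_spectrum.continuousOn _), cfc_id' ℝ A hA.isSelfAdjoint]
  rw [hfactor, ← mulVec_mulVec, hv, mulVec_zero]

lemma PosSemidef.cfc_rpow_cfc_rpow_inv (hA : A.PosSemidef) {β : ℝ} (hβ : β ≠ 0) :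
    cfc (fun t : ℝ => t ^ β) (cfc (fun t : ℝ => t ^ β⁻¹) A) = A := by
  rw [← cfc_comp _ _ A hA.1.isSelfAdjoint ((A.finite_real_spectrum.image _).continuousOn _)
    (A.finite_real_spectrum.continuousOn _)]
  conv_rhs => rw [← cfc_id' ℝ A hA.1.isSelfAdjoint]
  exact cfc_congr fun t ht => Real.rpow_inv_rpow (hA.nonneg_of_mem_spectrum ht) hβ

/-- The state `μ_α = A^{1/α} / tr A^{1/α}` of the paper is `A.normalizedRpow α⁻¹`. -/
noncomputable def normalizedRpow (A : Matrix n n ℂ) (r : ℝ) : Matrix n n ℂ :=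
  (cfc (fun t : ℝ => t ^ r) A).trace⁻¹ • cfc (fun t : ℝ => t ^ r) A

lemma IsHermitian.normalizedRpow_eq_cfc (hA : A.IsHermitian) (r : ℝ) :
    A.normalizedRpow r =
      cfc (fun t => (cfc (fun t : ℝ => t ^ r) A).trace.re⁻¹ * t ^ r) A := by
  rw [normalizedRpow, cfc_const_mul _ _ A (A.finite_real_spectrum.continuousOn _),
    RCLike.real_smul_eq_coe_smul (K := ℂ)]
  congr 1
  conv_lhs => rw [← hA.ofReal_re_trace_cfc]
  simp

lemma PosSemidef.normalizedRpow (hA : A.PosSemidef) (r : ℝ) :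
    (A.normalizedRpow r).PosSemidef := by
  have hT := (Complex.nonneg_iff.mp (hA.cfc_rpow r).trace_nonneg).1
  rw [hA.1.normalizedRpow_eq_cfc]
  exact hA.posSemidef_cfc fun t ht => mul_nonneg (inv_nonneg.2 hT) (Real.rpow_nonneg ht r)

lemma PosSemidef.trace_normalizedRpow (hA : A.PosSemidef) (hA0 : 0 < A.trace.re) (r : ℝ) :
    (A.normalizedRpow r).trace = 1 := by
  have hT := hA.re_trace_cfc_rpow_pos hA0 r
  rw [Matrix.normalizedRpow, trace_smul, smul_eq_mul, inv_mul_cancel₀]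
  exact fun h => hT.ne' (by simp [h])

lemma PosSemidef.mulVec_eq_zero_of_normalizedRpow (hA : A.PosSemidef) (hA0 : 0 < A.trace.re)
    {r : ℝ} (hr : r ≠ 0) {v : n → ℂ} (hv : A.normalizedRpow r *ᵥ v = 0) : A *ᵥ v = 0 := by
  have hT := hA.re_trace_cfc_rpow_pos hA0 r
  have hζv : cfc (fun t : ℝ => t ^ r) A *ᵥ v = 0 := by
    rw [Matrix.normalizedRpow, smul_mulVec, smul_eq_zero] at hv
    exact hv.resolve_left (inv_ne_zero fun h => hT.ne' (by simp [h]))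
  rw [← hA.cfc_rpow_cfc_rpow_inv (inv_ne_zero hr), inv_inv]
  exact (hA.cfc_rpow r).1.cfc_mulVec_eq_zero (f := fun t : ℝ => t ^ r⁻¹)
    (Real.zero_rpow (inv_ne_zero hr)) hζv

/-- The variational bound `re_trace_cfc_rpow_inv_rpow_le` is attained at `σ = μ_α`. -/
lemma PosSemidef.re_trace_mul_cfc_rpow_normalizedRpow (hA : A.PosSemidef)
    (hA0 : 0 < A.trace.re) {α : ℝ} (hα : α ≠ 0) :
    (A * cfc (fun t : ℝ => t ^ (1 - α)) (A.normalizedRpow α⁻¹)).trace.re =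
      (cfc (fun t : ℝ => t ^ α⁻¹) A).trace.re ^ α := by
  set T := (cfc (fun t : ℝ => t ^ α⁻¹) A).trace.re
  have hT : 0 < T := hA.re_trace_cfc_rpow_pos hA0 α⁻¹
  have hpoint : ∀ t : ℝ, 0 ≤ t → t * (T⁻¹ * t ^ α⁻¹) ^ (1 - α) = T ^ (α - 1) * t ^ α⁻¹ := by
    intro t ht
    obtain rfl | ht := ht.eq_or_lt
    · simp [Real.zero_rpow (inv_ne_zero hα)]
    rw [Real.mul_rpow (by positivity) (by positivity), Real.inv_rpow hT.le,
      ← Real.rpow_neg hT.le, neg_sub, ← Real.rpow_mul ht.le, mul_left_comm,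
      ← Real.rpow_one_add' ht.le]
    · congr 2
      field_simp
      ring
    · ring_nf
      simp [hα]
  have hmul : A * cfc (fun t : ℝ => t ^ (1 - α)) (A.normalizedRpow α⁻¹) =
      T ^ (α - 1) • cfc (fun t : ℝ => t ^ α⁻¹) A := by
    rw [hA.1.normalizedRpow_eq_cfc, ← cfc_comp _ _ A hA.1.isSelfAdjoint
      ((A.finite_real_spectrum.image _).continuousOn _) (A.finite_real_spectrum.continuousOn _),
      ← cfc_const_mul _ _ A (A.finite_real_spectrum.continuousOn _)]
    nth_rewrite 1 [← cfc_id' ℝ A hA.1.isSelfAdjoint]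
    rw [← cfc_mul _ _ A (A.finite_real_spectrum.continuousOn _)
      (A.finite_real_spectrum.continuousOn _)]
    exact cfc_congr fun t ht => hpoint t (hA.nonneg_of_mem_spectrum ht)
  rw [hmul, trace_smul, Complex.real_smul, Complex.re_ofReal_mul,
    ← Real.rpow_add_one hT.ne', sub_add_cancel]

theorem PosSemidef.extension_inequality {S P M : Matrix n n ℂ} (hS : S.PosSemidef)
    (hP : P.PosSemidef) (hS0 : 0 < S.trace.re) (hP0 : 0 < P.trace.re) {α η : ℝ} (hα : 1 < α)
    (hη0 : 0 ≤ η) (hη1 : η ≤ 1) (hM_def : M = ((1 - η : ℝ) : ℂ) • S + ((η : ℝ) : ℂ) • P) :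
    α / (α - 1) * Real.logb 2 (cfc (fun t : ℝ => t ^ α⁻¹) M).trace.re -
        α / (α - 1) * Real.logb 2 (cfc (fun t : ℝ => t ^ α⁻¹) S).trace.re ≥
      η * (1 / (α - 1) * Real.logb 2
          (P * cfc (fun t : ℝ => t ^ (1 - α)) (M.normalizedRpow α⁻¹)).trace.re -
        α / (α - 1) * Real.logb 2 (cfc (fun t : ℝ => t ^ α⁻¹) S).trace.re) := by
  have hα0 : α ≠ 0 := by positivity
  have hM : M.PosSemidef := hM_def ▸ (hS.smul (Complex.zero_le_real.2 (sub_nonneg.2 hη1))).add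
    (hP.smul (Complex.zero_le_real.2 hη0))
  have hM0 : 0 < M.trace.re := by
    simp only [hM_def, trace_add, trace_smul, Complex.add_re, smul_eq_mul, Complex.re_ofReal_mul]
    obtain hη1 | rfl := hη1.lt_or_eq
    · nlinarith [mul_pos (sub_pos.2 hη1) hS0, mul_nonneg hη0 hP0.le]
    · simpa using hP0
  set μ := M.normalizedRpow α⁻¹
  have hμ := hM.normalizedRpow α⁻¹
  have hμ1 := hM.trace_normalizedRpow hM0 α⁻¹
  have hker : ∀ v, μ *ᵥ v = 0 → M *ᵥ v = 0 := fun v =>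
    hM.mulVec_eq_zero_of_normalizedRpow hM0 (inv_ne_zero hα0)
  have hmix : (1 - η) * (S * cfc (fun t : ℝ => t ^ (1 - α)) μ).trace.re +
      η * (P * cfc (fun t : ℝ => t ^ (1 - α)) μ).trace.re =
      (cfc (fun t : ℝ => t ^ α⁻¹) M).trace.re ^ α := by
    rw [← hM.re_trace_mul_cfc_rpow_normalizedRpow hM0 hα0]
    nth_rw 1 [hM_def]
    simp only [add_mul, smul_mul_assoc, trace_add, trace_smul, Complex.add_re, smul_eq_mul,
      Complex.re_ofReal_mul]
    rfl
  refine extension_inequality_of_mix_eq_rpow hα hη0 hη1 (hS.re_trace_cfc_rpow_pos hS0 α⁻¹)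
    (hM.re_trace_cfc_rpow_pos hM0 α⁻¹) hmix (fun hη => ?_) (fun hη => ?_)
  · refine hS.re_trace_cfc_rpow_inv_rpow_le hμ hμ1 (fun v hv => ?_) hα.le
    exact hS.mulVec_eq_zero_of_smul_add_smul hP (sub_pos.2 hη) hη0 (hM_def ▸ hker v hv)
  · refine (Real.rpow_pos_of_pos (hP.re_trace_cfc_rpow_pos hP0 α⁻¹) α).trans_le
      (hP.re_trace_cfc_rpow_inv_rpow_le hμ hμ1 (fun v hv => ?_) hα.le)
    refine hP.mulVec_eq_zero_of_smul_add_smul hS hη (sub_nonneg.2 hη1) ?_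
    rw [add_comm, ← hM_def]
    exact hker v hv

end Matrix

/-- **Extending an ensemble by an extra state.**
For the cq-state `ρ'_{XQ} = (1−η) ρ_{XQ} + η |⊥⟩⟨⊥| ⊗ ρ₀`, with
`ζ' = ((1−η) ∑ x, p x • ρ x ^ α + η ρ₀ ^ α)^(1/α)` and `μ' = ζ'/tr ζ'`:
`χ_α(ρ'_{XQ}) − χ_α(ρ_{XQ}) ≥ η (D_α(ρ₀‖μ') − χ_α(ρ_{XQ}))`. -/
theorem chiAlpha_extension_inequality
    (d m : ℕ) (α : ℝ) (hα : 1 < α)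
    (p : Fin m → ℝ) (hp_nonneg : ∀ x, 0 ≤ p x) (hp_sum : ∑ x, p x = 1)
    (ρ : Fin m → Matrix (Fin d) (Fin d) ℂ)
    (hρ_psd : ∀ x, (ρ x).PosSemidef) (hρ_tr : ∀ x, (ρ x).trace = 1)
    (ρ₀ : Matrix (Fin d) (Fin d) ℂ) (hρ₀_psd : ρ₀.PosSemidef) (hρ₀_tr : ρ₀.trace = 1)
    (η : ℝ) (hη0 : 0 ≤ η) (hη1 : η ≤ 1)
    (χ χ' : ℝ) (ζ' μ' : Matrix (Fin d) (Fin d) ℂ)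
    (hχ : χ = (α / (α - 1)) *
        Real.logb 2 ((mpow (∑ x, (p x : ℂ) • mpow (ρ x) α) (1 / α)).trace).re)
    (hζ' : ζ' = mpow (((1 - η : ℝ) : ℂ) • ∑ x, (p x : ℂ) • mpow (ρ x) α +
        ((η : ℝ) : ℂ) • mpow ρ₀ α) (1 / α))
    (hμ' : μ' = (ζ'.trace)⁻¹ • ζ')
    (hχ' : χ' = (α / (α - 1)) * Real.logb 2 ((ζ'.trace).re)) :
    χ' - χ ≥ η * ((1 / (α - 1)) *
        Real.logb 2 ((mpow ρ₀ α * mpow μ' (1 - α)).trace).re - χ) := by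
  have hα0 : α ≠ 0 := by positivity
  simp only [mpow_eq_cfc_rpow _ hα0, mpow_eq_cfc_rpow _ (one_div_ne_zero hα0),
    mpow_eq_cfc_rpow _ (sub_ne_zero.mpr hα.ne)] at hχ hζ' ⊢
  rw [one_div] at hχ hζ'
  subst hχ hχ' hμ' hζ'
  exact PosSemidef.extension_inequality
    (posSemidef_sum_ofReal_smul hp_nonneg fun x => (hρ_psd x).cfc_rpow α)
    (hρ₀_psd.cfc_rpow α)
    (re_trace_sum_ofReal_smul_pos hp_nonneg (hp_sum ▸ one_pos) fun x =>
      (hρ_psd x).re_trace_cfc_rpow_pos (by simp [hρ_tr]) α)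
    (hρ₀_psd.re_trace_cfc_rpow_pos (by simp [hρ₀_tr]) α) hα hη0 hη1 rfl
end
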